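/- arXiv:2408.07356 — 3 statements merged into one kernel-verified Lean document; each statement's English description precedes it below -/
import Mathlib

section
/- Let l₁ < l₂ and let L be the linearized nonlocal operator on [l₁,l₂]. Suppose λ₁ ∈ ℝ admits a continuous eigenfunction ψ = (ψ₁,ψ₂) with ψ₁ > 0 and ψ₂ > 0 on [l₁,l₂] and L[ψ] = λ₁ψ. If φ = (φ₁,φ₂) is a continuous pair on [l₁,l₂] with φ₁ ≥ 0, φ₂ ≥ 0, neither φ₁ nor φ₂ identically zero, and λ ∈ ℝ satisfies L[φ] ≤ λφ pointwise on [l₁,l₂], then λ₁ ≤ λ; moreover λ₁ = λ only if L[φ] = λφ on [l₁,l₂]. -/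
open MeasureTheory Real Filter Topology Set

noncomputable section

/-- Condition (J): continuous, bounded, nonnegative, positive at 0, even, integrable
with total integral 1. -/
def KernelCond (J : ℝ → ℝ) : Prop :=
  Continuous J ∧ (∃ C : ℝ, ∀ x : ℝ, J x ≤ C) ∧ (∀ x : ℝ, 0 ≤ J x) ∧ 0 < J 0 ∧
    (∀ x : ℝ, J (-x) = J x) ∧ Integrable J ∧ (∫ x : ℝ, J x) = 1

/-- Condition (H) on the reaction pair (H, G): both C² on [0,∞), vanishing at 0,
with positive first derivatives on [0,∞), negative second derivatives on (0,∞),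
and G(H(ẑ)/a) < bẑ for some ẑ > 0. -/
def ReactionCond (a b : ℝ) (H G : ℝ → ℝ) : Prop :=
  ContDiffOn ℝ 2 H (Ici 0) ∧ ContDiffOn ℝ 2 G (Ici 0) ∧
  H 0 = 0 ∧ G 0 = 0 ∧
  (∀ z ∈ Ici (0:ℝ), 0 < derivWithin H (Ici 0) z) ∧
  (∀ z ∈ Ici (0:ℝ), 0 < derivWithin G (Ici 0) z) ∧
  (∀ z ∈ Ioi (0:ℝ), derivWithin (derivWithin H (Ici 0)) (Ici 0) z < 0) ∧
  (∀ z ∈ Ioi (0:ℝ), derivWithin (derivWithin G (Ici 0)) (Ici 0) z < 0) ∧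
  (∃ zh > 0, G (H zh / a) < b * zh)

/-- The right-hand side of the free boundary equation in (1.1):
∫₀^{h(t)} ∫_{h(t)}^∞ [μ₁ J₁(x−y) u(t,x) + μ₂ J₂(x−y) v(t,x)] dy dx. -/
def frontSpeed (μ₁ μ₂ : ℝ) (J₁ J₂ : ℝ → ℝ) (u v : ℝ → ℝ → ℝ) (h : ℝ → ℝ) (t : ℝ) : ℝ :=
  ∫ x in (0:ℝ)..h t, ∫ y in Ioi (h t),
    (μ₁ * J₁ (x - y) * u t x + μ₂ * J₂ (x - y) * v t x)

/-- (u, v, h) is a solution of the free boundary problem (1.1). -/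
def IsSolFB (d₁ d₂ a b μ₁ μ₂ h₀ : ℝ) (J₁ J₂ H G u₀ v₀ : ℝ → ℝ)
    (u v : ℝ → ℝ → ℝ) (h : ℝ → ℝ) : Prop :=
  h 0 = h₀ ∧
  (∃ h' : ℝ → ℝ, ContinuousOn h' (Ici 0) ∧
    (∀ t ∈ Ici (0:ℝ), HasDerivWithinAt h (h' t) (Ici 0) t) ∧
    (∀ t ∈ Ioi (0:ℝ), h' t = frontSpeed μ₁ μ₂ J₁ J₂ u v h t)) ∧
  ContinuousOn (fun p : ℝ × ℝ => u p.1 p.2) {p : ℝ × ℝ | 0 ≤ p.1 ∧ p.2 ∈ Icc 0 (h p.1)} ∧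
  ContinuousOn (fun p : ℝ × ℝ => v p.1 p.2) {p : ℝ × ℝ | 0 ≤ p.1 ∧ p.2 ∈ Icc 0 (h p.1)} ∧
  (∀ t ∈ Ioi (0:ℝ), ∀ x ∈ Ico 0 (h t),
    HasDerivAt (fun s => u s x)
      (d₁ * (∫ y in (0:ℝ)..h t, J₁ (x - y) * u t y) - d₁ * u t x - a * u t x + H (v t x)) t ∧
    HasDerivAt (fun s => v s x)
      (d₂ * (∫ y in (0:ℝ)..h t, J₂ (x - y) * v t y) - d₂ * v t x - b * v t x + G (u t x)) t) ∧
  (∀ t ∈ Ioi (0:ℝ), u t (h t) = 0 ∧ v t (h t) = 0) ∧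
  (∀ x ∈ Icc 0 h₀, u 0 x = u₀ x ∧ v 0 x = v₀ x)

/-- First component of the linearized nonlocal operator L on [l₁, l₂]. -/
def opL1 (d₁ a H0 : ℝ) (J₁ : ℝ → ℝ) (l₁ l₂ : ℝ) (φ₁ φ₂ : ℝ → ℝ) (x : ℝ) : ℝ :=
  d₁ * (∫ y in l₁..l₂, J₁ (x - y) * φ₁ y) - (d₁ + a) * φ₁ x + H0 * φ₂ x

/-- Second component of the linearized nonlocal operator L on [l₁, l₂]. -/
def opL2 (d₂ b G0 : ℝ) (J₂ : ℝ → ℝ) (l₁ l₂ : ℝ) (φ₁ φ₂ : ℝ → ℝ) (x : ℝ) : ℝ :=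
  d₂ * (∫ y in l₁..l₂, J₂ (x - y) * φ₂ y) - (d₂ + b) * φ₂ x + G0 * φ₁ x

/-- The principal eigenvalue λ_p(l₁,l₂): the infimum of all λ such that
L[φ] ≤ λφ on [l₁,l₂] for some continuous pair φ with both components positive. -/
def lamP (d₁ d₂ a b H0 G0 : ℝ) (J₁ J₂ : ℝ → ℝ) (l₁ l₂ : ℝ) : ℝ :=
  sInf {lam : ℝ | ∃ φ₁ φ₂ : ℝ → ℝ,
    ContinuousOn φ₁ (Icc l₁ l₂) ∧ ContinuousOn φ₂ (Icc l₁ l₂) ∧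
    (∀ x ∈ Icc l₁ l₂, 0 < φ₁ x ∧ 0 < φ₂ x) ∧
    (∀ x ∈ Icc l₁ l₂, opL1 d₁ a H0 J₁ l₁ l₂ φ₁ φ₂ x ≤ lam * φ₁ x ∧
      opL2 d₂ b G0 J₂ l₁ l₂ φ₁ φ₂ x ≤ lam * φ₂ x)}

/-- (U, V) solves the steady state system (2.4) on the half line [0,∞). -/
def SteadyHalf (d₁ d₂ a b : ℝ) (J₁ J₂ H G : ℝ → ℝ) (U V : ℝ → ℝ) : Prop :=
  ∀ x ∈ Ici (0:ℝ),
    d₁ * (∫ y in Ioi (0:ℝ), J₁ (x - y) * U y) - d₁ * U x - a * U x + H (V x) = 0 ∧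
    d₂ * (∫ y in Ioi (0:ℝ), J₂ (x - y) * V y) - d₂ * V x - b * V x + G (U x) = 0

/-- (U, V) is a bounded positive pair on the half line [0,∞). -/
def BddPosHalf (U V : ℝ → ℝ) : Prop :=
  (∀ x ∈ Ici (0:ℝ), 0 < U x ∧ 0 < V x) ∧ ∃ M : ℝ, ∀ x ∈ Ici (0:ℝ), U x ≤ M ∧ V x ≤ M

/-- (U, V) solves the steady state system (2.5) on [0, l]. -/
def SteadyFix (d₁ d₂ a b l : ℝ) (J₁ J₂ H G : ℝ → ℝ) (U V : ℝ → ℝ) : Prop :=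
  ∀ x ∈ Icc 0 l,
    d₁ * (∫ y in (0:ℝ)..l, J₁ (x - y) * U y) - d₁ * U x - a * U x + H (V x) = 0 ∧
    d₂ * (∫ y in (0:ℝ)..l, J₂ (x - y) * V y) - d₂ * V x - b * V x + G (U x) = 0

/-- (u, v) is a solution of the Cauchy problem (2.9) on [0, l] with initial data (w₀, z₀). -/
def IsSolFix (d₁ d₂ a b l : ℝ) (J₁ J₂ H G w₀ z₀ : ℝ → ℝ) (u v : ℝ → ℝ → ℝ) : Prop :=
  ContinuousOn (fun p : ℝ × ℝ => u p.1 p.2) (Ici 0 ×ˢ Icc 0 l) ∧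
  ContinuousOn (fun p : ℝ × ℝ => v p.1 p.2) (Ici 0 ×ˢ Icc 0 l) ∧
  (∀ t ∈ Ioi (0:ℝ), ∀ x ∈ Icc 0 l,
    HasDerivAt (fun s => u s x)
      (d₁ * (∫ y in (0:ℝ)..l, J₁ (x - y) * u t y) - d₁ * u t x - a * u t x + H (v t x)) t ∧
    HasDerivAt (fun s => v s x)
      (d₂ * (∫ y in (0:ℝ)..l, J₂ (x - y) * v t y) - d₂ * v t x - b * v t x + G (u t x)) t) ∧
  (∀ x ∈ Icc 0 l, u 0 x = w₀ x ∧ v 0 x = z₀ x)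

/-- (u, v) is a (locally-in-time bounded) solution of the Cauchy problem (2.10)
on the half line [0,∞) with initial data (w₀, z₀). -/
def IsSolHalf (d₁ d₂ a b : ℝ) (J₁ J₂ H G w₀ z₀ : ℝ → ℝ) (u v : ℝ → ℝ → ℝ) : Prop :=
  ContinuousOn (fun p : ℝ × ℝ => u p.1 p.2) (Ici 0 ×ˢ Ici 0) ∧
  ContinuousOn (fun p : ℝ × ℝ => v p.1 p.2) (Ici 0 ×ˢ Ici 0) ∧
  (∀ T > (0:ℝ), ∃ M : ℝ, ∀ t ∈ Icc 0 T, ∀ x ∈ Ici (0:ℝ), |u t x| ≤ M ∧ |v t x| ≤ M) ∧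
  (∀ t ∈ Ioi (0:ℝ), ∀ x ∈ Ici (0:ℝ),
    HasDerivAt (fun s => u s x)
      (d₁ * (∫ y in Ioi (0:ℝ), J₁ (x - y) * u t y) - d₁ * u t x - a * u t x + H (v t x)) t ∧
    HasDerivAt (fun s => v s x)
      (d₂ * (∫ y in Ioi (0:ℝ), J₂ (x - y) * v t y) - d₂ * v t x - b * v t x + G (u t x)) t) ∧
  (∀ x ∈ Ici (0:ℝ), u 0 x = w₀ x ∧ v 0 x = z₀ x)


private lemma convCont {J f : ℝ → ℝ} (hJ : Continuous J) (hf : Continuous f) (l₁ l₂ : ℝ) :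
    Continuous fun x => ∫ y in l₁..l₂, J (x - y) * f y := by
  apply intervalIntegral.continuous_parametric_intervalIntegral_of_continuous' (μ := volume)
  exact (hJ.comp (continuous_fst.sub continuous_snd)).mul (hf.comp continuous_snd)

private lemma symSwap {J f g : ℝ → ℝ} (hJ : Continuous J) (hJe : ∀ x, J (-x) = J x)
    (hf : Continuous f) (hg : Continuous g) {l₁ l₂ : ℝ} (h : l₁ ≤ l₂) :
    ∫ x in l₁..l₂, (∫ y in l₁..l₂, J (x - y) * f y) * g x
      = ∫ x in l₁..l₂, (∫ y in l₁..l₂, J (x - y) * g y) * f x := by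
  have hF : Integrable (Function.uncurry fun x y => J (x - y) * f y * g x)
      ((volume.restrict (Ioc l₁ l₂)).prod (volume.restrict (Ioc l₁ l₂))) := by
    rw [Measure.prod_restrict]
    have hc : Continuous (Function.uncurry fun x y => J (x - y) * f y * g x) :=
      ((hJ.comp (continuous_fst.sub continuous_snd)).mul (hf.comp continuous_snd)).mul
        (hg.comp continuous_fst)
    exact ((hc.continuousOn).integrableOn_compact (isCompact_Icc.prod isCompact_Icc)).mono_set
      (prod_mono Ioc_subset_Icc_self Ioc_subset_Icc_self)
  simp only [intervalIntegral.integral_of_le h]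
  calc
    ∫ x in Ioc l₁ l₂, (∫ y in Ioc l₁ l₂, J (x - y) * f y) * g x
        = ∫ x in Ioc l₁ l₂, ∫ y in Ioc l₁ l₂, J (x - y) * f y * g x := by
          simp_rw [← MeasureTheory.integral_mul_const]
    _ = ∫ y in Ioc l₁ l₂, ∫ x in Ioc l₁ l₂, J (x - y) * f y * g x :=
          MeasureTheory.integral_integral_swap hF
    _ = ∫ y in Ioc l₁ l₂, (∫ x in Ioc l₁ l₂, J (y - x) * g x) * f y := by
          refine MeasureTheory.integral_congr_ae (Filter.Eventually.of_forall fun y => ?_)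
          have h1 : (fun x => J (x - y) * f y * g x) = fun x => f y * (J (y - x) * g x) := by
            funext x
            rw [show x - y = -(y - x) by ring, hJe]
            ring
          show (∫ x in Ioc l₁ l₂, J (x - y) * f y * g x)
              = (∫ x in Ioc l₁ l₂, J (y - x) * g x) * f y
          rw [h1, MeasureTheory.integral_const_mul, mul_comm]

private lemma posIntegral {f : ℝ → ℝ} (hf : Continuous f) {l₁ l₂ : ℝ} (hl : l₁ < l₂)
    (hnn : ∀ x ∈ Icc l₁ l₂, 0 ≤ f x) {x₀ : ℝ} (hx₀ : x₀ ∈ Icc l₁ l₂) (hpos : 0 < f x₀) :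
    0 < ∫ x in l₁..l₂, f x := by
  obtain ⟨δ, hδ, hball⟩ := Metric.continuousAt_iff.1 hf.continuousAt (f x₀ / 2) (by linarith)
  set c : ℝ := max l₁ (x₀ - δ / 2) with hc
  set d : ℝ := min l₂ (x₀ + δ / 2) with hd
  have hc1 : l₁ ≤ c := le_max_left _ _
  have hd1 : d ≤ l₂ := min_le_left _ _
  have hcd : c < d := by
    apply max_lt
    · exact lt_min hl (by linarith [hx₀.1])
    · exact lt_min (by linarith [hx₀.2]) (by linarith)
  have hmid : ∀ x ∈ Ioo c d, 0 < f x := by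
    intro x hx
    have h1 : x₀ - δ / 2 ≤ c := le_max_right _ _
    have h2 : d ≤ x₀ + δ / 2 := min_le_right _ _
    have hdist : dist x x₀ < δ := by
      rw [Real.dist_eq, abs_lt]
      constructor <;> [linarith [hx.1]; linarith [hx.2]]
    have := hball hdist
    rw [Real.dist_eq, abs_lt] at this
    linarith [this.1]
  have hii : ∀ p q : ℝ, IntervalIntegrable f volume p q := fun p q => hf.intervalIntegrable p q
  have hsplit1 : ∫ x in l₁..d, f x = (∫ x in l₁..c, f x) + ∫ x in c..d, f x :=
    (intervalIntegral.integral_add_adjacent_intervals (hii _ _) (hii _ _)).symm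
  have hsplit2 : ∫ x in l₁..l₂, f x = (∫ x in l₁..d, f x) + ∫ x in d..l₂, f x :=
    (intervalIntegral.integral_add_adjacent_intervals (hii _ _) (hii _ _)).symm
  have i1 : 0 ≤ ∫ x in l₁..c, f x :=
    intervalIntegral.integral_nonneg hc1 fun u hu =>
      hnn u ⟨hu.1, hu.2.trans (hcd.le.trans hd1)⟩
  have i3 : 0 ≤ ∫ x in d..l₂, f x :=
    intervalIntegral.integral_nonneg hd1 fun u hu =>
      hnn u ⟨(hc1.trans hcd.le).trans hu.1, hu.2⟩
  have i2 : 0 < ∫ x in c..d, f x :=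
    intervalIntegral.intervalIntegral_pos_of_pos_on (hii _ _) hmid hcd
  rw [hsplit2, hsplit1]
  linarith

private lemma zeroOfIntegralZero {f : ℝ → ℝ} (hf : Continuous f) {l₁ l₂ : ℝ} (hl : l₁ < l₂)
    (hnn : ∀ x ∈ Icc l₁ l₂, 0 ≤ f x) (hint : (∫ x in l₁..l₂, f x) = 0) :
    ∀ x ∈ Icc l₁ l₂, f x = 0 := by
  intro x hx
  by_contra h
  have hpos : 0 < f x := (hnn x hx).lt_of_ne (Ne.symm h)
  exact absurd hint (ne_of_gt (posIntegral hf hl hnn hx hpos))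

set_option maxHeartbeats 1600000 in
theorem statement11
    (d₁ d₂ a b : ℝ) (J₁ J₂ H G : ℝ → ℝ)
    (hd₁ : 0 < d₁) (hd₂ : 0 < d₂) (ha : 0 < a) (hb : 0 < b)
    (hJ₁ : KernelCond J₁) (hJ₂ : KernelCond J₂) (hHG : ReactionCond a b H G)
    (H0 G0 : ℝ) (hH0 : H0 = derivWithin H (Ici 0) 0) (hG0 : G0 = derivWithin G (Ici 0) 0)
    (l₁ l₂ : ℝ) (hl : l₁ < l₂) (lam₁ : ℝ) (ψ₁ ψ₂ : ℝ → ℝ)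
    (hψ₁c : ContinuousOn ψ₁ (Icc l₁ l₂)) (hψ₂c : ContinuousOn ψ₂ (Icc l₁ l₂))
    (hψpos : ∀ x ∈ Icc l₁ l₂, 0 < ψ₁ x ∧ 0 < ψ₂ x)
    (hψeig : ∀ x ∈ Icc l₁ l₂,
      opL1 d₁ a H0 J₁ l₁ l₂ ψ₁ ψ₂ x = lam₁ * ψ₁ x ∧
      opL2 d₂ b G0 J₂ l₁ l₂ ψ₁ ψ₂ x = lam₁ * ψ₂ x)
    (φ₁ φ₂ : ℝ → ℝ)
    (hφ₁c : ContinuousOn φ₁ (Icc l₁ l₂)) (hφ₂c : ContinuousOn φ₂ (Icc l₁ l₂))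
    (hφ₁n : ∀ x ∈ Icc l₁ l₂, 0 ≤ φ₁ x) (hφ₂n : ∀ x ∈ Icc l₁ l₂, 0 ≤ φ₂ x)
    (hφ₁ne : ∃ x ∈ Icc l₁ l₂, φ₁ x ≠ 0) (hφ₂ne : ∃ x ∈ Icc l₁ l₂, φ₂ x ≠ 0)
    (lam : ℝ)
    (hineq : ∀ x ∈ Icc l₁ l₂,
      opL1 d₁ a H0 J₁ l₁ l₂ φ₁ φ₂ x ≤ lam * φ₁ x ∧
      opL2 d₂ b G0 J₂ l₁ l₂ φ₁ φ₂ x ≤ lam * φ₂ x) :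
    lam₁ ≤ lam ∧ (lam₁ = lam → ∀ x ∈ Icc l₁ l₂,
      opL1 d₁ a H0 J₁ l₁ l₂ φ₁ φ₂ x = lam * φ₁ x ∧
      opL2 d₂ b G0 J₂ l₁ l₂ φ₁ φ₂ x = lam * φ₂ x) := by
  obtain ⟨hJ₁c, -, -, -, hJ₁e, -, -⟩ := hJ₁
  obtain ⟨hJ₂c, -, -, -, hJ₂e, -, -⟩ := hJ₂
  have hH0pos : 0 < H0 := hH0 ▸ hHG.2.2.2.2.1 0 (mem_Ici.2 le_rfl)
  have hG0pos : 0 < G0 := hG0 ▸ hHG.2.2.2.2.2.1 0 (mem_Ici.2 le_rfl)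
  -- continuous extensions
  obtain ⟨Φ₁, hΦ₁d⟩ : ∃ F : ℝ → ℝ, F = IccExtend hl.le ((Icc l₁ l₂).restrict φ₁) := ⟨_, rfl⟩
  obtain ⟨Φ₂, hΦ₂d⟩ : ∃ F : ℝ → ℝ, F = IccExtend hl.le ((Icc l₁ l₂).restrict φ₂) := ⟨_, rfl⟩
  obtain ⟨Ψ₁, hΨ₁d⟩ : ∃ F : ℝ → ℝ, F = IccExtend hl.le ((Icc l₁ l₂).restrict ψ₁) := ⟨_, rfl⟩
  obtain ⟨Ψ₂, hΨ₂d⟩ : ∃ F : ℝ → ℝ, F = IccExtend hl.le ((Icc l₁ l₂).restrict ψ₂) := ⟨_, rfl⟩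
  have hΦ₁ : Continuous Φ₁ := by rw [hΦ₁d]; exact (hφ₁c.restrict).Icc_extend'
  have hΦ₂ : Continuous Φ₂ := by rw [hΦ₂d]; exact (hφ₂c.restrict).Icc_extend'
  have hΨ₁ : Continuous Ψ₁ := by rw [hΨ₁d]; exact (hψ₁c.restrict).Icc_extend'
  have hΨ₂ : Continuous Ψ₂ := by rw [hΨ₂d]; exact (hψ₂c.restrict).Icc_extend'
  have hΦ₁e : ∀ x ∈ Icc l₁ l₂, Φ₁ x = φ₁ x := fun x hx => by
    rw [hΦ₁d, IccExtend_of_mem hl.le _ hx]; rfl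
  have hΦ₂e : ∀ x ∈ Icc l₁ l₂, Φ₂ x = φ₂ x := fun x hx => by
    rw [hΦ₂d, IccExtend_of_mem hl.le _ hx]; rfl
  have hΨ₁e : ∀ x ∈ Icc l₁ l₂, Ψ₁ x = ψ₁ x := fun x hx => by
    rw [hΨ₁d, IccExtend_of_mem hl.le _ hx]; rfl
  have hΨ₂e : ∀ x ∈ Icc l₁ l₂, Ψ₂ x = ψ₂ x := fun x hx => by
    rw [hΨ₂d, IccExtend_of_mem hl.le _ hx]; rfl
  -- convolutions agree
  have hconv : ∀ (J f F : ℝ → ℝ), (∀ x ∈ Icc l₁ l₂, F x = f x) →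
      ∀ x, (∫ y in l₁..l₂, J (x - y) * F y) = ∫ y in l₁..l₂, J (x - y) * f y := by
    intro J f F hFf x
    apply intervalIntegral.integral_congr
    intro y hy
    rw [uIcc_of_le hl.le] at hy
    show J (x - y) * F y = J (x - y) * f y
    rw [hFf y hy]
  -- the operator applied to the extensions agrees with the original on Icc
  have hL1 : ∀ x ∈ Icc l₁ l₂,
      opL1 d₁ a H0 J₁ l₁ l₂ Φ₁ Φ₂ x = opL1 d₁ a H0 J₁ l₁ l₂ φ₁ φ₂ x := by
    intro x hx
    simp only [opL1]
    rw [hconv J₁ φ₁ Φ₁ hΦ₁e x, hΦ₁e x hx, hΦ₂e x hx]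
  have hL2 : ∀ x ∈ Icc l₁ l₂,
      opL2 d₂ b G0 J₂ l₁ l₂ Φ₁ Φ₂ x = opL2 d₂ b G0 J₂ l₁ l₂ φ₁ φ₂ x := by
    intro x hx
    simp only [opL2]
    rw [hconv J₂ φ₂ Φ₂ hΦ₂e x, hΦ₁e x hx, hΦ₂e x hx]
  have hM1 : ∀ x ∈ Icc l₁ l₂,
      opL1 d₁ a H0 J₁ l₁ l₂ Ψ₁ Ψ₂ x = lam₁ * Ψ₁ x := by
    intro x hx
    have : opL1 d₁ a H0 J₁ l₁ l₂ Ψ₁ Ψ₂ x = opL1 d₁ a H0 J₁ l₁ l₂ ψ₁ ψ₂ x := by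
      simp only [opL1]
      rw [hconv J₁ ψ₁ Ψ₁ hΨ₁e x, hΨ₁e x hx, hΨ₂e x hx]
    rw [this, (hψeig x hx).1, hΨ₁e x hx]
  have hM2 : ∀ x ∈ Icc l₁ l₂,
      opL2 d₂ b G0 J₂ l₁ l₂ Ψ₁ Ψ₂ x = lam₁ * Ψ₂ x := by
    intro x hx
    have : opL2 d₂ b G0 J₂ l₁ l₂ Ψ₁ Ψ₂ x = opL2 d₂ b G0 J₂ l₁ l₂ ψ₁ ψ₂ x := by
      simp only [opL2]
      rw [hconv J₂ ψ₂ Ψ₂ hΨ₂e x, hΨ₁e x hx, hΨ₂e x hx]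
    rw [this, (hψeig x hx).2, hΨ₂e x hx]
  -- continuity facts
  have hK₁Φ : Continuous fun x => ∫ y in l₁..l₂, J₁ (x - y) * Φ₁ y := convCont hJ₁c hΦ₁ l₁ l₂
  have hK₂Φ : Continuous fun x => ∫ y in l₁..l₂, J₂ (x - y) * Φ₂ y := convCont hJ₂c hΦ₂ l₁ l₂
  have hK₁Ψ : Continuous fun x => ∫ y in l₁..l₂, J₁ (x - y) * Ψ₁ y := convCont hJ₁c hΨ₁ l₁ l₂
  have hK₂Ψ : Continuous fun x => ∫ y in l₁..l₂, J₂ (x - y) * Ψ₂ y := convCont hJ₂c hΨ₂ l₁ l₂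
  have hL1c : Continuous fun x => opL1 d₁ a H0 J₁ l₁ l₂ Φ₁ Φ₂ x := by
    simp only [opL1]
    exact ((continuous_const.mul hK₁Φ).sub (continuous_const.mul hΦ₁)).add
      (continuous_const.mul hΦ₂)
  have hL2c : Continuous fun x => opL2 d₂ b G0 J₂ l₁ l₂ Φ₁ Φ₂ x := by
    simp only [opL2]
    exact ((continuous_const.mul hK₂Φ).sub (continuous_const.mul hΦ₂)).add
      (continuous_const.mul hΦ₁)
  have hM1c : Continuous fun x => opL1 d₁ a H0 J₁ l₁ l₂ Ψ₁ Ψ₂ x := by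
    simp only [opL1]
    exact ((continuous_const.mul hK₁Ψ).sub (continuous_const.mul hΨ₁)).add
      (continuous_const.mul hΨ₂)
  have hM2c : Continuous fun x => opL2 d₂ b G0 J₂ l₁ l₂ Ψ₁ Ψ₂ x := by
    simp only [opL2]
    exact ((continuous_const.mul hK₂Ψ).sub (continuous_const.mul hΨ₂)).add
      (continuous_const.mul hΨ₁)
  -- the two symmetry identities
  have e1 : ∫ x in l₁..l₂, (∫ y in l₁..l₂, J₁ (x - y) * Φ₁ y) * Ψ₁ x
      = ∫ x in l₁..l₂, (∫ y in l₁..l₂, J₁ (x - y) * Ψ₁ y) * Φ₁ x :=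
    symSwap hJ₁c hJ₁e hΦ₁ hΨ₁ hl.le
  have e2 : ∫ x in l₁..l₂, (∫ y in l₁..l₂, J₂ (x - y) * Φ₂ y) * Ψ₂ x
      = ∫ x in l₁..l₂, (∫ y in l₁..l₂, J₂ (x - y) * Ψ₂ y) * Φ₂ x :=
    symSwap hJ₂c hJ₂e hΦ₂ hΨ₂ hl.le
  -- self-adjointness with weights
  have hdiff : (∫ x in l₁..l₂, (G0 * Ψ₁ x * opL1 d₁ a H0 J₁ l₁ l₂ Φ₁ Φ₂ x
        + H0 * Ψ₂ x * opL2 d₂ b G0 J₂ l₁ l₂ Φ₁ Φ₂ x))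
      = ∫ x in l₁..l₂, (G0 * Φ₁ x * opL1 d₁ a H0 J₁ l₁ l₂ Ψ₁ Ψ₂ x
        + H0 * Φ₂ x * opL2 d₂ b G0 J₂ l₁ l₂ Ψ₁ Ψ₂ x) := by
    rw [← sub_eq_zero, ← intervalIntegral.integral_sub
      ((((continuous_const.fun_mul hΨ₁).fun_mul hL1c).fun_add
        ((continuous_const.fun_mul hΨ₂).fun_mul hL2c)).intervalIntegrable _ _)
      ((((continuous_const.fun_mul hΦ₁).fun_mul hM1c).fun_add
        ((continuous_const.fun_mul hΦ₂).fun_mul hM2c)).intervalIntegrable _ _)]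
    have hptw : (fun x => (G0 * Ψ₁ x * opL1 d₁ a H0 J₁ l₁ l₂ Φ₁ Φ₂ x
          + H0 * Ψ₂ x * opL2 d₂ b G0 J₂ l₁ l₂ Φ₁ Φ₂ x)
        - (G0 * Φ₁ x * opL1 d₁ a H0 J₁ l₁ l₂ Ψ₁ Ψ₂ x
          + H0 * Φ₂ x * opL2 d₂ b G0 J₂ l₁ l₂ Ψ₁ Ψ₂ x))
        = fun x => d₁ * G0 * ((∫ y in l₁..l₂, J₁ (x - y) * Φ₁ y) * Ψ₁ x
            - (∫ y in l₁..l₂, J₁ (x - y) * Ψ₁ y) * Φ₁ x)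
          + d₂ * H0 * ((∫ y in l₁..l₂, J₂ (x - y) * Φ₂ y) * Ψ₂ x
            - (∫ y in l₁..l₂, J₂ (x - y) * Ψ₂ y) * Φ₂ x) := by
      funext x
      simp only [opL1, opL2]
      ring
    rw [hptw, intervalIntegral.integral_add
      ((continuous_const.fun_mul ((hK₁Φ.fun_mul hΨ₁).fun_sub (hK₁Ψ.fun_mul hΦ₁))).intervalIntegrable _ _)
      ((continuous_const.fun_mul ((hK₂Φ.fun_mul hΨ₂).fun_sub (hK₂Ψ.fun_mul hΦ₂))).intervalIntegrable _ _),
      intervalIntegral.integral_const_mul, intervalIntegral.integral_const_mul,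
      intervalIntegral.integral_sub ((hK₁Φ.fun_mul hΨ₁).intervalIntegrable _ _)
        ((hK₁Ψ.fun_mul hΦ₁).intervalIntegrable _ _),
      intervalIntegral.integral_sub ((hK₂Φ.fun_mul hΨ₂).intervalIntegrable _ _)
        ((hK₂Ψ.fun_mul hΦ₂).intervalIntegrable _ _), e1, e2]
    ring
  -- the right-hand side equals lam₁ * S
  have hSc : Continuous fun x => G0 * (Ψ₁ x * Φ₁ x) + H0 * (Ψ₂ x * Φ₂ x) :=
    (continuous_const.mul (hΨ₁.mul hΦ₁)).add (continuous_const.mul (hΨ₂.mul hΦ₂))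
  have hA2 : (∫ x in l₁..l₂, (G0 * Φ₁ x * opL1 d₁ a H0 J₁ l₁ l₂ Ψ₁ Ψ₂ x
        + H0 * Φ₂ x * opL2 d₂ b G0 J₂ l₁ l₂ Ψ₁ Ψ₂ x))
      = lam₁ * ∫ x in l₁..l₂, (G0 * (Ψ₁ x * Φ₁ x) + H0 * (Ψ₂ x * Φ₂ x)) := by
    rw [← intervalIntegral.integral_const_mul]
    apply intervalIntegral.integral_congr
    intro x hx
    rw [uIcc_of_le hl.le] at hx
    show G0 * Φ₁ x * opL1 d₁ a H0 J₁ l₁ l₂ Ψ₁ Ψ₂ x + H0 * Φ₂ x * opL2 d₂ b G0 J₂ l₁ l₂ Ψ₁ Ψ₂ x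
      = lam₁ * (G0 * (Ψ₁ x * Φ₁ x) + H0 * (Ψ₂ x * Φ₂ x))
    rw [hM1 x hx, hM2 x hx]
    ring
  -- the integral of w
  obtain ⟨w, hwdef⟩ : ∃ w : ℝ → ℝ, w = fun x =>
      G0 * Ψ₁ x * (lam * Φ₁ x - opL1 d₁ a H0 J₁ l₁ l₂ Φ₁ Φ₂ x)
      + H0 * Ψ₂ x * (lam * Φ₂ x - opL2 d₂ b G0 J₂ l₁ l₂ Φ₁ Φ₂ x) := ⟨_, rfl⟩
  have hwc : Continuous w := by
    rw [hwdef]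
    exact ((continuous_const.mul hΨ₁).mul ((continuous_const.mul hΦ₁).sub hL1c)).add
      ((continuous_const.mul hΨ₂).mul ((continuous_const.mul hΦ₂).sub hL2c))
  have hwval : (∫ x in l₁..l₂, w x)
      = (lam - lam₁) * ∫ x in l₁..l₂, (G0 * (Ψ₁ x * Φ₁ x) + H0 * (Ψ₂ x * Φ₂ x)) := by
    have hptw : w = fun x =>
        lam * (G0 * (Ψ₁ x * Φ₁ x) + H0 * (Ψ₂ x * Φ₂ x))
        - (G0 * Ψ₁ x * opL1 d₁ a H0 J₁ l₁ l₂ Φ₁ Φ₂ x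
          + H0 * Ψ₂ x * opL2 d₂ b G0 J₂ l₁ l₂ Φ₁ Φ₂ x) := by
      funext x
      simp only [hwdef]
      ring
    rw [hptw, intervalIntegral.integral_sub
      ((continuous_const.fun_mul hSc).intervalIntegrable _ _)
      ((((continuous_const.fun_mul hΨ₁).fun_mul hL1c).fun_add
        ((continuous_const.fun_mul hΨ₂).fun_mul hL2c)).intervalIntegrable _ _),
      intervalIntegral.integral_const_mul, hdiff, hA2]
    ring
  -- positivity of S
  have hSnn : ∀ x ∈ Icc l₁ l₂, 0 ≤ G0 * (Ψ₁ x * Φ₁ x) + H0 * (Ψ₂ x * Φ₂ x) := by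
    intro x hx
    rw [hΨ₁e x hx, hΦ₁e x hx, hΨ₂e x hx, hΦ₂e x hx]
    have h1 := (hψpos x hx).1
    have h2 := (hψpos x hx).2
    have h3 := hφ₁n x hx
    have h4 := hφ₂n x hx
    positivity
  obtain ⟨x₀, hx₀, hx₀ne⟩ := hφ₁ne
  have hSx₀ : 0 < G0 * (Ψ₁ x₀ * Φ₁ x₀) + H0 * (Ψ₂ x₀ * Φ₂ x₀) := by
    rw [hΨ₁e x₀ hx₀, hΦ₁e x₀ hx₀, hΨ₂e x₀ hx₀, hΦ₂e x₀ hx₀]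
    have h1 := (hψpos x₀ hx₀).1
    have h2 := (hψpos x₀ hx₀).2
    have h3 := (hφ₁n x₀ hx₀).lt_of_ne (Ne.symm hx₀ne)
    have h4 := hφ₂n x₀ hx₀
    have : 0 < G0 * (ψ₁ x₀ * φ₁ x₀) := by positivity
    nlinarith [mul_nonneg (mul_nonneg hH0pos.le h2.le) h4]
  have hSpos : 0 < ∫ x in l₁..l₂, (G0 * (Ψ₁ x * Φ₁ x) + H0 * (Ψ₂ x * Φ₂ x)) :=
    posIntegral hSc hl hSnn hx₀ hSx₀
  -- nonnegativity of w
  have hwterm1 : ∀ x ∈ Icc l₁ l₂, 0 ≤ lam * Φ₁ x - opL1 d₁ a H0 J₁ l₁ l₂ Φ₁ Φ₂ x := by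
    intro x hx
    rw [hΦ₁e x hx, hL1 x hx, sub_nonneg]
    exact (hineq x hx).1
  have hwterm2 : ∀ x ∈ Icc l₁ l₂, 0 ≤ lam * Φ₂ x - opL2 d₂ b G0 J₂ l₁ l₂ Φ₁ Φ₂ x := by
    intro x hx
    rw [hΦ₂e x hx, hL2 x hx, sub_nonneg]
    exact (hineq x hx).2
  have hwnn : ∀ x ∈ Icc l₁ l₂, 0 ≤ w x := by
    intro x hx
    simp only [hwdef]
    have h1 := (hψpos x hx).1
    have h2 := (hψpos x hx).2
    have h3 := hwterm1 x hx
    have h4 := hwterm2 x hx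
    have e1' := hΨ₁e x hx
    have e2' := hΨ₂e x hx
    rw [e1', e2']
    have : 0 ≤ G0 * ψ₁ x * (lam * Φ₁ x - opL1 d₁ a H0 J₁ l₁ l₂ Φ₁ Φ₂ x) :=
      mul_nonneg (mul_nonneg hG0pos.le h1.le) h3
    have : 0 ≤ H0 * ψ₂ x * (lam * Φ₂ x - opL2 d₂ b G0 J₂ l₁ l₂ Φ₁ Φ₂ x) :=
      mul_nonneg (mul_nonneg hH0pos.le h2.le) h4
    linarith [mul_nonneg (mul_nonneg hG0pos.le h1.le) h3]
  have hwint : 0 ≤ ∫ x in l₁..l₂, w x := intervalIntegral.integral_nonneg hl.le hwnn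
  have hle : lam₁ ≤ lam := by
    by_contra hlt
    push_neg at hlt
    rw [hwval] at hwint
    nlinarith [mul_neg_of_neg_of_pos (show lam - lam₁ < 0 by linarith) hSpos]
  refine ⟨hle, fun heq => ?_⟩
  -- equality case
  have hwzero : (∫ x in l₁..l₂, w x) = 0 := by rw [hwval, heq]; ring
  have hwz := zeroOfIntegralZero hwc hl hwnn hwzero
  intro x hx
  have hz := hwz x hx
  simp only [hwdef] at hz
  have h1 := (hψpos x hx).1
  have h2 := (hψpos x hx).2
  have h3 := hwterm1 x hx
  have h4 := hwterm2 x hx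
  have e1' := hΨ₁e x hx
  have e2' := hΨ₂e x hx
  rw [e1', e2'] at hz
  have hc1 : 0 < G0 * ψ₁ x := mul_pos hG0pos h1
  have hc2 : 0 < H0 * ψ₂ x := mul_pos hH0pos h2
  have key : ∀ A B c₁ c₂ : ℝ, 0 ≤ A → 0 ≤ B → 0 < c₁ → 0 < c₂ →
      c₁ * A + c₂ * B = 0 → A = 0 ∧ B = 0 := by
    intro A B c₁ c₂ hA hB hcc1 hcc2 hzz
    constructor <;> nlinarith [mul_nonneg hcc1.le hA, mul_nonneg hcc2.le hB]
  obtain ⟨hz1, hz2⟩ := key _ _ _ _ h3 h4 hc1 hc2 hz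
  rw [hΦ₁e x hx, hL1 x hx] at hz1
  rw [hΦ₂e x hx, hL2 x hx] at hz2
  constructor <;> linarith
end
end

section
/- Let l₁ < l₂ and let L be the linearized nonlocal operator on [l₁,l₂]. Suppose λ₁ ∈ ℝ admits a continuous eigenfunction ψ = (ψ₁,ψ₂) with ψ₁ > 0 and ψ₂ > 0 on [l₁,l₂] and L[ψ] = λ₁ψ. If φ = (φ₁,φ₂) is a continuous pair on [l₁,l₂] with φ₁ ≥ 0 and φ₂ ≥ 0, not both identically zero, and λ ∈ ℝ satisfies L[φ] ≥ λφ pointwise on [l₁,l₂], then λ₁ ≥ λ; moreover λ₁ = λ only if L[φ] = λφ on [l₁,l₂]. -/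
open MeasureTheory Real Filter Topology Set

noncomputable section

lemma aux_zero_of_integral_nonpos {f : ℝ → ℝ} {l₁ l₂ : ℝ} (hl : l₁ < l₂)
    (hc : ContinuousOn f (Icc l₁ l₂)) (hnn : ∀ y ∈ Icc l₁ l₂, 0 ≤ f y)
    (hz : (∫ y in l₁..l₂, f y) ≤ 0) : ∀ y ∈ Icc l₁ l₂, f y = 0 := by
  by_contra hcon
  push_neg at hcon
  obtain ⟨y₀, hy₀, hfy₀⟩ := hcon
  have hfpos : 0 < f y₀ := (hnn y₀ hy₀).lt_of_ne (Ne.symm hfy₀)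
  have hev : ∀ᶠ y in 𝓝[Icc l₁ l₂] y₀, f y₀ / 2 < f y :=
    (hc y₀ hy₀).eventually (eventually_gt_nhds (by linarith))
  obtain ⟨δ, hδ, hball⟩ := Metric.mem_nhdsWithin_iff.mp hev
  set c := max l₁ (y₀ - δ / 2) with hc'
  set d := min l₂ (y₀ + δ / 2) with hd'
  have hcd : c < d := by
    apply max_lt
    · exact lt_min hl (by linarith [hy₀.1])
    · exact lt_min (by linarith [hy₀.2]) (by linarith)
  have hsub : Icc c d ⊆ Icc l₁ l₂ := Icc_subset_Icc (le_max_left _ _) (min_le_left _ _)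
  have hlow : ∀ y ∈ Icc c d, f y₀ / 2 ≤ f y := by
    intro y hy
    refine (hball ⟨?_, hsub hy⟩).le
    rw [Metric.mem_ball, Real.dist_eq, abs_lt]
    have hy1 : y₀ - δ / 2 ≤ c := le_max_right _ _
    have hy2 : d ≤ y₀ + δ / 2 := min_le_right _ _
    constructor
    · linarith [hy.1]
    · linarith [hy.2]
  have hI : IntervalIntegrable f volume l₁ l₂ :=
    ContinuousOn.intervalIntegrable (by rwa [uIcc_of_le hl.le])
  have hcle : c ≤ l₂ := le_trans hcd.le (min_le_left _ _)
  have hld : l₁ ≤ d := le_trans (le_max_left _ _) hcd.le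
  have hI1 : IntervalIntegrable f volume l₁ c := by
    apply hI.mono_set
    rw [uIcc_of_le hl.le, uIcc_of_le (le_max_left l₁ _)]
    exact Icc_subset_Icc le_rfl hcle
  have hI2 : IntervalIntegrable f volume c d := by
    apply hI.mono_set
    rw [uIcc_of_le hl.le, uIcc_of_le hcd.le]
    exact hsub
  have hI3 : IntervalIntegrable f volume d l₂ := by
    apply hI.mono_set
    rw [uIcc_of_le hl.le, uIcc_of_le (min_le_left l₂ _)]
    exact Icc_subset_Icc hld le_rfl
  have h1 : 0 ≤ ∫ y in l₁..c, f y :=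
    intervalIntegral.integral_nonneg (le_max_left _ _)
      (fun u hu => hnn u ⟨hu.1, le_trans hu.2 hcle⟩)
  have h3 : 0 ≤ ∫ y in d..l₂, f y :=
    intervalIntegral.integral_nonneg (min_le_left _ _)
      (fun u hu => hnn u ⟨le_trans hld hu.1, hu.2⟩)
  have h2 : (d - c) * f y₀ / 2 ≤ ∫ y in c..d, f y := by
    have := intervalIntegral.integral_mono_on hcd.le intervalIntegrable_const hI2 hlow
    simpa using this
  have hsplit : (∫ y in l₁..c, f y) + ((∫ y in c..d, f y) + ∫ y in d..l₂, f y)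
      = ∫ y in l₁..l₂, f y := by
    rw [intervalIntegral.integral_add_adjacent_intervals hI2 hI3,
      intervalIntegral.integral_add_adjacent_intervals hI1 (hI2.trans hI3)]
  have hmid : 0 < (d - c) * f y₀ / 2 := by
    have hdc : 0 < d - c := sub_pos.mpr hcd
    positivity
  linarith

theorem statement12
    (d₁ d₂ a b : ℝ) (J₁ J₂ H G : ℝ → ℝ)
    (hd₁ : 0 < d₁) (hd₂ : 0 < d₂) (ha : 0 < a) (hb : 0 < b)
    (hJ₁ : KernelCond J₁) (hJ₂ : KernelCond J₂) (hHG : ReactionCond a b H G)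
    (H0 G0 : ℝ) (hH0 : H0 = derivWithin H (Ici 0) 0) (hG0 : G0 = derivWithin G (Ici 0) 0)
    (l₁ l₂ : ℝ) (hl : l₁ < l₂) (lam₁ : ℝ) (ψ₁ ψ₂ : ℝ → ℝ)
    (hψ₁c : ContinuousOn ψ₁ (Icc l₁ l₂)) (hψ₂c : ContinuousOn ψ₂ (Icc l₁ l₂))
    (hψpos : ∀ x ∈ Icc l₁ l₂, 0 < ψ₁ x ∧ 0 < ψ₂ x)
    (hψeig : ∀ x ∈ Icc l₁ l₂,
      opL1 d₁ a H0 J₁ l₁ l₂ ψ₁ ψ₂ x = lam₁ * ψ₁ x ∧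
      opL2 d₂ b G0 J₂ l₁ l₂ ψ₁ ψ₂ x = lam₁ * ψ₂ x)
    (φ₁ φ₂ : ℝ → ℝ)
    (hφ₁c : ContinuousOn φ₁ (Icc l₁ l₂)) (hφ₂c : ContinuousOn φ₂ (Icc l₁ l₂))
    (hφ₁n : ∀ x ∈ Icc l₁ l₂, 0 ≤ φ₁ x) (hφ₂n : ∀ x ∈ Icc l₁ l₂, 0 ≤ φ₂ x)
    (hφne : ∃ x ∈ Icc l₁ l₂, φ₁ x ≠ 0 ∨ φ₂ x ≠ 0)
    (lam : ℝ)
    (hineq : ∀ x ∈ Icc l₁ l₂,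
      lam * φ₁ x ≤ opL1 d₁ a H0 J₁ l₁ l₂ φ₁ φ₂ x ∧
      lam * φ₂ x ≤ opL2 d₂ b G0 J₂ l₁ l₂ φ₁ φ₂ x) :
    lam ≤ lam₁ ∧ (lam₁ = lam → ∀ x ∈ Icc l₁ l₂,
      opL1 d₁ a H0 J₁ l₁ l₂ φ₁ φ₂ x = lam * φ₁ x ∧
      opL2 d₂ b G0 J₂ l₁ l₂ φ₁ φ₂ x = lam * φ₂ x) := by
  classical
  have hH0pos : 0 < H0 := hH0 ▸ hHG.2.2.2.2.1 0 Set.self_mem_Ici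
  have hG0pos : 0 < G0 := hG0 ▸ hHG.2.2.2.2.2.1 0 Set.self_mem_Ici
  -- kernel positivity near 0
  obtain ⟨δ₁, hδ₁, hJ₁pos⟩ : ∃ δ > 0, ∀ z : ℝ, |z| < δ → 0 < J₁ z := by
    have h : ∀ᶠ z in 𝓝 (0:ℝ), 0 < J₁ z :=
      (hJ₁.1.tendsto 0).eventually (eventually_gt_nhds hJ₁.2.2.2.1)
    obtain ⟨ε, hε, hh⟩ := Metric.eventually_nhds_iff.mp h
    exact ⟨ε, hε, fun z hz => hh (by simpa [Real.dist_eq] using hz)⟩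
  obtain ⟨δ₂, hδ₂, hJ₂pos⟩ : ∃ δ > 0, ∀ z : ℝ, |z| < δ → 0 < J₂ z := by
    have h : ∀ᶠ z in 𝓝 (0:ℝ), 0 < J₂ z :=
      (hJ₂.1.tendsto 0).eventually (eventually_gt_nhds hJ₂.2.2.2.1)
    obtain ⟨ε, hε, hh⟩ := Metric.eventually_nhds_iff.mp h
    exact ⟨ε, hε, fun z hz => hh (by simpa [Real.dist_eq] using hz)⟩
  have hKne : (Icc l₁ l₂).Nonempty := nonempty_Icc.mpr hl.le
  have hrc : ContinuousOn (fun x => max (φ₁ x / ψ₁ x) (φ₂ x / ψ₂ x)) (Icc l₁ l₂) :=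
    (hφ₁c.div hψ₁c fun x hx => (hψpos x hx).1.ne').sup
      (hφ₂c.div hψ₂c fun x hx => (hψpos x hx).2.ne')
  obtain ⟨x₀, hx₀K, hx₀max⟩ := isCompact_Icc.exists_isMaxOn hKne hrc
  set t := max (φ₁ x₀ / ψ₁ x₀) (φ₂ x₀ / ψ₂ x₀) with htdef
  have hrle : ∀ x ∈ Icc l₁ l₂, max (φ₁ x / ψ₁ x) (φ₂ x / ψ₂ x) ≤ t := fun x hx => hx₀max hx
  obtain ⟨x₁, hx₁K, hne⟩ := hφne
  have ht : 0 < t := by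
    rcases hne with h | h
    · have h1 : 0 < φ₁ x₁ / ψ₁ x₁ :=
        div_pos ((hφ₁n x₁ hx₁K).lt_of_ne (Ne.symm h)) (hψpos x₁ hx₁K).1
      exact lt_of_lt_of_le (lt_of_lt_of_le h1 (le_max_left _ _)) (hrle x₁ hx₁K)
    · have h1 : 0 < φ₂ x₁ / ψ₂ x₁ :=
        div_pos ((hφ₂n x₁ hx₁K).lt_of_ne (Ne.symm h)) (hψpos x₁ hx₁K).2
      exact lt_of_lt_of_le (lt_of_lt_of_le h1 (le_max_right _ _)) (hrle x₁ hx₁K)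
  set w₁ : ℝ → ℝ := fun x => t * ψ₁ x - φ₁ x with hw₁def
  set w₂ : ℝ → ℝ := fun x => t * ψ₂ x - φ₂ x with hw₂def
  have hw₁nn : ∀ x ∈ Icc l₁ l₂, 0 ≤ w₁ x := by
    intro x hx
    have h1 : φ₁ x / ψ₁ x ≤ t := le_trans (le_max_left _ _) (hrle x hx)
    have h2 := (div_le_iff₀ (hψpos x hx).1).mp h1
    simp only [hw₁def]
    linarith
  have hw₂nn : ∀ x ∈ Icc l₁ l₂, 0 ≤ w₂ x := by
    intro x hx
    have h1 : φ₂ x / ψ₂ x ≤ t := le_trans (le_max_right _ _) (hrle x hx)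
    have h2 := (div_le_iff₀ (hψpos x hx).2).mp h1
    simp only [hw₂def]
    linarith
  have hw₁c : ContinuousOn w₁ (Icc l₁ l₂) := (continuousOn_const.mul hψ₁c).sub hφ₁c
  have hw₂c : ContinuousOn w₂ (Icc l₁ l₂) := (continuousOn_const.mul hψ₂c).sub hφ₂c
  have htouch : w₁ x₀ = 0 ∨ w₂ x₀ = 0 := by
    rcases max_choice (φ₁ x₀ / ψ₁ x₀) (φ₂ x₀ / ψ₂ x₀) with h | h
    · left
      simp only [hw₁def]
      rw [← htdef] at h
      rw [h, div_mul_cancel₀ _ (hψpos x₀ hx₀K).1.ne', sub_self]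
    · right
      simp only [hw₂def]
      rw [← htdef] at h
      rw [h, div_mul_cancel₀ _ (hψpos x₀ hx₀K).2.ne', sub_self]
  have hII : ∀ (Jk : ℝ → ℝ), Continuous Jk → ∀ (g : ℝ → ℝ), ContinuousOn g (Icc l₁ l₂) →
      ∀ x : ℝ, IntervalIntegrable (fun y => Jk (x - y) * g y) volume l₁ l₂ := by
    intro Jk hJk g hg x
    apply ContinuousOn.intervalIntegrable
    rw [uIcc_of_le hl.le]
    exact ((hJk.comp (continuous_const.sub continuous_id)).continuousOn).mul hg
  have key1 : ∀ x ∈ Icc l₁ l₂,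
      d₁ * (∫ y in l₁..l₂, J₁ (x - y) * w₁ y) - (d₁ + a) * w₁ x + H0 * w₂ x
        ≤ lam₁ * (t * ψ₁ x) - lam * φ₁ x := by
    intro x hx
    have e := (hψeig x hx).1
    have i := (hineq x hx).1
    have hiψ := hII J₁ hJ₁.1 ψ₁ hψ₁c x
    have hiφ := hII J₁ hJ₁.1 φ₁ hφ₁c x
    have hint : (∫ y in l₁..l₂, J₁ (x - y) * w₁ y)
        = t * (∫ y in l₁..l₂, J₁ (x - y) * ψ₁ y) - ∫ y in l₁..l₂, J₁ (x - y) * φ₁ y := by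
      rw [← intervalIntegral.integral_const_mul,
        ← intervalIntegral.integral_sub (hiψ.const_mul t) hiφ]
      apply intervalIntegral.integral_congr
      intro y _
      simp only [hw₁def]
      ring
    rw [hint]
    simp only [opL1] at e i
    have e' := congrArg (fun z => t * z) e
    simp only [hw₁def, hw₂def]
    linarith [e', i]
  have key2 : ∀ x ∈ Icc l₁ l₂,
      d₂ * (∫ y in l₁..l₂, J₂ (x - y) * w₂ y) - (d₂ + b) * w₂ x + G0 * w₁ x
        ≤ lam₁ * (t * ψ₂ x) - lam * φ₂ x := by
    intro x hx
    have e := (hψeig x hx).2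
    have i := (hineq x hx).2
    have hiψ := hII J₂ hJ₂.1 ψ₂ hψ₂c x
    have hiφ := hII J₂ hJ₂.1 φ₂ hφ₂c x
    have hint : (∫ y in l₁..l₂, J₂ (x - y) * w₂ y)
        = t * (∫ y in l₁..l₂, J₂ (x - y) * ψ₂ y) - ∫ y in l₁..l₂, J₂ (x - y) * φ₂ y := by
      rw [← intervalIntegral.integral_const_mul,
        ← intervalIntegral.integral_sub (hiψ.const_mul t) hiφ]
      apply intervalIntegral.integral_congr
      intro y _
      simp only [hw₂def]
      ring
    rw [hint]
    simp only [opL2] at e i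
    have e' := congrArg (fun z => t * z) e
    simp only [hw₁def, hw₂def]
    linarith [e', i]
  have hI₁nn : ∀ x ∈ Icc l₁ l₂, 0 ≤ ∫ y in l₁..l₂, J₁ (x - y) * w₁ y := fun x hx =>
    intervalIntegral.integral_nonneg hl.le fun y hy => mul_nonneg (hJ₁.2.2.1 _) (hw₁nn y hy)
  have hI₂nn : ∀ x ∈ Icc l₁ l₂, 0 ≤ ∫ y in l₁..l₂, J₂ (x - y) * w₂ y := fun x hx =>
    intervalIntegral.integral_nonneg hl.le fun y hy => mul_nonneg (hJ₂.2.2.1 _) (hw₂nn y hy)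
  have hzero1 : ∀ x ∈ Icc l₁ l₂, w₁ x = 0 → lam * (t * ψ₁ x) ≤ lam₁ * (t * ψ₁ x) ∧
      (lam₁ = lam → (∫ y in l₁..l₂, J₁ (x - y) * w₁ y) ≤ 0 ∧ w₂ x = 0) := by
    intro x hx h0
    have hk := key1 x hx
    have hφ : φ₁ x = t * ψ₁ x := by
      simp only [hw₁def] at h0
      linarith
    rw [h0, hφ] at hk
    have hInn := hI₁nn x hx
    have hw2 := hw₂nn x hx
    constructor
    · linarith [mul_nonneg hd₁.le hInn, mul_nonneg hH0pos.le hw2]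
    · intro heq
      rw [heq] at hk
      have h1 : d₁ * (∫ y in l₁..l₂, J₁ (x - y) * w₁ y) ≤ d₁ * 0 := by
        rw [mul_zero]
        linarith [mul_nonneg hH0pos.le hw2]
      have h2 : H0 * w₂ x ≤ H0 * 0 := by
        rw [mul_zero]
        linarith [mul_nonneg hd₁.le hInn]
      exact ⟨(mul_le_mul_iff_right₀ hd₁).mp h1,
        le_antisymm ((mul_le_mul_iff_right₀ hH0pos).mp h2) hw2⟩
  have hzero2 : ∀ x ∈ Icc l₁ l₂, w₂ x = 0 → lam * (t * ψ₂ x) ≤ lam₁ * (t * ψ₂ x) ∧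
      (lam₁ = lam → (∫ y in l₁..l₂, J₂ (x - y) * w₂ y) ≤ 0 ∧ w₁ x = 0) := by
    intro x hx h0
    have hk := key2 x hx
    have hφ : φ₂ x = t * ψ₂ x := by
      simp only [hw₂def] at h0
      linarith
    rw [h0, hφ] at hk
    have hInn := hI₂nn x hx
    have hw1 := hw₁nn x hx
    constructor
    · linarith [mul_nonneg hd₂.le hInn, mul_nonneg hG0pos.le hw1]
    · intro heq
      rw [heq] at hk
      have h1 : d₂ * (∫ y in l₁..l₂, J₂ (x - y) * w₂ y) ≤ d₂ * 0 := by
        rw [mul_zero]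
        linarith [mul_nonneg hG0pos.le hw1]
      have h2 : G0 * w₁ x ≤ G0 * 0 := by
        rw [mul_zero]
        linarith [mul_nonneg hd₂.le hInn]
      exact ⟨(mul_le_mul_iff_right₀ hd₂).mp h1,
        le_antisymm ((mul_le_mul_iff_right₀ hG0pos).mp h2) hw1⟩
  have hlam : lam ≤ lam₁ := by
    rcases htouch with h | h
    · have h1 := (hzero1 x₀ hx₀K h).1
      have hpos : 0 < t * ψ₁ x₀ := mul_pos ht (hψpos x₀ hx₀K).1
      exact le_of_mul_le_mul_right h1 hpos
    · have h1 := (hzero2 x₀ hx₀K h).1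
      have hpos : 0 < t * ψ₂ x₀ := mul_pos ht (hψpos x₀ hx₀K).2
      exact le_of_mul_le_mul_right h1 hpos
  refine ⟨hlam, fun heq => ?_⟩
  have prop1 : ∀ x ∈ Icc l₁ l₂, w₁ x = 0 →
      w₂ x = 0 ∧ ∀ y ∈ Icc l₁ l₂, |y - x| < δ₁ → w₁ y = 0 := by
    intro x hx h0
    obtain ⟨hIle, hw2⟩ := (hzero1 x hx h0).2 heq
    refine ⟨hw2, ?_⟩
    have hcont : ContinuousOn (fun y => J₁ (x - y) * w₁ y) (Icc l₁ l₂) :=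
      ((hJ₁.1.comp (continuous_const.sub continuous_id)).continuousOn).mul hw₁c
    have hall := aux_zero_of_integral_nonpos hl hcont
      (fun y hy => mul_nonneg (hJ₁.2.2.1 _) (hw₁nn y hy)) hIle
    intro y hy hyd
    have hJpos : 0 < J₁ (x - y) := hJ₁pos _ (by rw [abs_sub_comm]; exact hyd)
    rcases mul_eq_zero.mp (hall y hy) with h | h
    · exact absurd h hJpos.ne'
    · exact h
  have prop2 : ∀ x ∈ Icc l₁ l₂, w₂ x = 0 →
      w₁ x = 0 ∧ ∀ y ∈ Icc l₁ l₂, |y - x| < δ₂ → w₂ y = 0 := by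
    intro x hx h0
    obtain ⟨hIle, hw1⟩ := (hzero2 x hx h0).2 heq
    refine ⟨hw1, ?_⟩
    have hcont : ContinuousOn (fun y => J₂ (x - y) * w₂ y) (Icc l₁ l₂) :=
      ((hJ₂.1.comp (continuous_const.sub continuous_id)).continuousOn).mul hw₂c
    have hall := aux_zero_of_integral_nonpos hl hcont
      (fun y hy => mul_nonneg (hJ₂.2.2.1 _) (hw₂nn y hy)) hIle
    intro y hy hyd
    have hJpos : 0 < J₂ (x - y) := hJ₂pos _ (by rw [abs_sub_comm]; exact hyd)
    rcases mul_eq_zero.mp (hall y hy) with h | h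
    · exact absurd h hJpos.ne'
    · exact h
  haveI : PreconnectedSpace (Icc l₁ l₂) :=
    Subtype.preconnectedSpace (isPreconnected_Icc (a := l₁) (b := l₂))
  set Z : Set (Icc l₁ l₂) := {x : Icc l₁ l₂ | w₁ ↑x = 0 ∧ w₂ ↑x = 0} with hZ
  have hZne : Z.Nonempty := by
    rcases htouch with h | h
    · exact ⟨⟨x₀, hx₀K⟩, h, ((hzero1 x₀ hx₀K h).2 heq).2⟩
    · exact ⟨⟨x₀, hx₀K⟩, ((hzero2 x₀ hx₀K h).2 heq).2, h⟩
  have hZclosed : IsClosed Z :=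
    (isClosed_eq hw₁c.restrict continuous_const).inter
      (isClosed_eq hw₂c.restrict continuous_const)
  have hZopen : IsOpen Z := by
    rw [Metric.isOpen_iff]
    rintro ⟨x, hxK⟩ ⟨h1, h2⟩
    refine ⟨min δ₁ δ₂, lt_min hδ₁ hδ₂, ?_⟩
    rintro ⟨y, hyK⟩ hy
    rw [Metric.mem_ball, Subtype.dist_eq, Real.dist_eq] at hy
    constructor
    · exact (prop1 x hxK h1).2 y hyK (lt_of_lt_of_le hy (min_le_left _ _))
    · exact (prop2 x hxK h2).2 y hyK (lt_of_lt_of_le hy (min_le_right _ _))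
  have hZuniv : Z = univ := IsClopen.eq_univ ⟨hZclosed, hZopen⟩ hZne
  have hwzero : ∀ x ∈ Icc l₁ l₂, φ₁ x = t * ψ₁ x ∧ φ₂ x = t * ψ₂ x := by
    intro x hx
    have hxZ : (⟨x, hx⟩ : Icc l₁ l₂) ∈ Z := hZuniv ▸ mem_univ _
    obtain ⟨h1, h2⟩ := hxZ
    simp only [hw₁def] at h1
    simp only [hw₂def] at h2
    exact ⟨by linarith, by linarith⟩
  intro x hx
  obtain ⟨h1, h2⟩ := hwzero x hx
  constructor
  · have e := (hψeig x hx).1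
    simp only [opL1] at e ⊢
    have hint : (∫ y in l₁..l₂, J₁ (x - y) * φ₁ y)
        = t * ∫ y in l₁..l₂, J₁ (x - y) * ψ₁ y := by
      rw [← intervalIntegral.integral_const_mul]
      apply intervalIntegral.integral_congr
      intro y hy
      rw [uIcc_of_le hl.le] at hy
      show J₁ (x - y) * φ₁ y = t * (J₁ (x - y) * ψ₁ y)
      rw [(hwzero y hy).1]
      ring
    rw [hint, h1, h2, ← heq]
    have e' := congrArg (fun z => t * z) e
    linarith [e']
  · have e := (hψeig x hx).2
    simp only [opL2] at e ⊢
    have hint : (∫ y in l₁..l₂, J₂ (x - y) * φ₂ y)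
        = t * ∫ y in l₁..l₂, J₂ (x - y) * ψ₂ y := by
      rw [← intervalIntegral.integral_const_mul]
      apply intervalIntegral.integral_congr
      intro y hy
      rw [uIcc_of_le hl.le] at hy
      show J₂ (x - y) * φ₂ y = t * (J₂ (x - y) * ψ₂ y)
      rw [(hwzero y hy).2]
      ring
    rw [hint, h1, h2, ← heq]
    have e' := congrArg (fun z => t * z) e
    linarith [e']
end
end

section
/- For l₁ < l₂ let λ_p(l₁,l₂) be the principal eigenvalue of the linearized nonlocal operator L on [l₁,l₂]. Then λ_p(l₁,l₂) → γ_A as l₂ − l₁ → ∞ and λ_p(l₁,l₂) → γ_B as l₂ − l₁ → 0, where γ_A = (−a − b + √((a−b)² + 4H'(0)G'(0)))/2 and γ_B = (−a − d₁ − b − d₂ + √((a+d₁−b−d₂)² + 4H'(0)G'(0)))/2. In particular, γ_B ≤ λ_p(l₁,l₂) ≤ γ_A for all l₂ > l₁. -/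
open MeasureTheory Real Filter Topology Set

noncomputable section

/-!
Every bound compares `L` with pairs `(H0 η, q η)`, for which `L` reduces to the scalar `2 × 2`
problem `(λ + a + d₁ (1 - c₁)) (λ + b + d₂ (1 - c₂)) = H0 G0`, where `cᵢ` bounds
`∫ Jᵢ(x - y) η(y) dy / η(x)`; its larger root is `perronRoot`. For constant `η` the ratio lies
between `0` and the mass of `Jᵢ` on the interval, which is at most `1` and at most
`(sup Jᵢ) (l₂ - l₁)`: this gives `γ_B ≤ λ_p ≤ γ_A` and the limit for short intervals. For long
intervals the sine bump of the interval has ratio at least `(∫_{-K}^{K} Jᵢ) cos (π K / ℓ)`, which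
tends to `1` for `K = √ℓ`; scaling a supersolution down until it touches the corresponding
subsolution turns this into a lower bound on `λ_p` tending to `γ_A`.
-/

/-- The Perron root of the cooperative matrix `!![-A, p; q, -B]` with `p * q = c`, that is, the
larger root of `(λ + A) * (λ + B) = c`. -/
def perronRoot (A B c : ℝ) : ℝ := (-A - B + √((A - B) ^ 2 + 4 * c)) / 2

section perronRoot

variable {A B c : ℝ}

lemma abs_sub_lt_sqrt (hc : 0 < c) : |A - B| < √((A - B) ^ 2 + 4 * c) := by
  rw [← Real.sqrt_sq_eq_abs]
  exact Real.sqrt_lt_sqrt (sq_nonneg _) (by linarith)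

lemma perronRoot_add_left_pos (hc : 0 < c) : 0 < perronRoot A B c + A := by
  have := (abs_lt.1 (abs_sub_lt_sqrt (A := A) (B := B) hc)).1
  unfold perronRoot; linarith

lemma perronRoot_add_mul_add (hc : 0 ≤ c) :
    (perronRoot A B c + A) * (perronRoot A B c + B) = c := by
  have := Real.sq_sqrt (show 0 ≤ (A - B) ^ 2 + 4 * c by positivity)
  unfold perronRoot; linear_combination this / 4

lemma tendsto_perronRoot {α : Type*} {l : Filter α} {f g : α → ℝ} (hf : Tendsto f l (𝓝 A))
    (hg : Tendsto g l (𝓝 B)) :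
    Tendsto (fun i => perronRoot (f i) (g i) c) l (𝓝 (perronRoot A B c)) := by
  have hcont : Continuous fun p : ℝ × ℝ => perronRoot p.1 p.2 c := by
    unfold perronRoot; fun_prop
  exact (hcont.tendsto (A, B)).comp (hf.prodMk_nhds hg)

end perronRoot

section kernel

variable {J : ℝ → ℝ} {l₁ l₂ : ℝ}

lemma intervalIntegral_comp_sub_le_integral (hJ : Integrable J) (hJ0 : ∀ x, 0 ≤ J x)
    (hl : l₁ ≤ l₂) (x : ℝ) : ∫ y in l₁..l₂, J (x - y) ≤ ∫ y, J y := by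
  rw [intervalIntegral.integral_comp_sub_left, intervalIntegral.integral_of_le (by linarith)]
  exact setIntegral_le_integral hJ (.of_forall hJ0)

lemma intervalIntegral_comp_sub_le_mul {C : ℝ} (hJ0 : ∀ x, 0 ≤ J x) (hJC : ∀ x, J x ≤ C)
    (hl : l₁ ≤ l₂) (x : ℝ) : ∫ y in l₁..l₂, J (x - y) ≤ C * (l₂ - l₁) := by
  have h := intervalIntegral.norm_integral_le_of_norm_le_const (a := l₁) (b := l₂)
    (f := fun y => J (x - y)) (C := C) fun y _ => by
      rw [Real.norm_of_nonneg (hJ0 _)]; exact hJC _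
  rw [abs_of_nonneg (sub_nonneg.2 hl)] at h
  exact (le_abs_self _).trans h

lemma intervalIntegral_le_intervalIntegral_of_sign {f : ℝ → ℝ} (hf : Continuous f) {a b c d : ℝ}
    (hab : a ≤ b) (hcd : c ≤ d) (h_in : ∀ y ∈ Ioc a b \ Ioc c d, 0 ≤ f y)
    (h_out : ∀ y ∈ Ioc c d \ Ioc a b, f y ≤ 0) :
    ∫ y in c..d, f y ≤ ∫ y in a..b, f y := by
  rw [intervalIntegral.integral_of_le hcd, intervalIntegral.integral_of_le hab,
    ← integral_indicator measurableSet_Ioc, ← integral_indicator measurableSet_Ioc]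
  refine integral_mono ((integrable_indicator_iff measurableSet_Ioc).2 hf.integrableOn_Ioc)
    ((integrable_indicator_iff measurableSet_Ioc).2 hf.integrableOn_Ioc) fun y => ?_
  by_cases hy : y ∈ Ioc a b <;> by_cases hy' : y ∈ Ioc c d <;>
    simp only [indicator_of_mem, indicator_of_notMem, hy, hy', le_refl, not_false_eq_true]
  · exact h_in y ⟨hy, hy'⟩
  · exact h_out y ⟨hy', hy⟩

lemma intervalIntegral_eq_half_add_comp_neg {g : ℝ → ℝ} (hg : Continuous g) (K : ℝ) :
    ∫ z in -K..K, g z = ∫ z in -K..K, (g z + g (-z)) / 2 := by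
  have hg' : Continuous fun z => g (-z) := by fun_prop
  rw [intervalIntegral.integral_div, intervalIntegral.integral_add (hg.intervalIntegrable _ _)
    (hg'.intervalIntegrable _ _), intervalIntegral.integral_comp_neg, neg_neg]
  ring

end kernel

def sineBump (l₁ l₂ x : ℝ) : ℝ := sin (π * ((x - l₁) / (l₂ - l₁)))

section sineBump

variable {l₁ l₂ : ℝ}

@[fun_prop]
lemma continuous_sineBump (l₁ l₂ : ℝ) : Continuous (sineBump l₁ l₂) := by
  unfold sineBump; fun_prop

lemma sineBump_nonneg (hl : l₁ < l₂) {x : ℝ} (hx : x ∈ Icc l₁ l₂) : 0 ≤ sineBump l₁ l₂ x := by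
  have hu0 : 0 ≤ (x - l₁) / (l₂ - l₁) := div_nonneg (by linarith [hx.1]) (by linarith)
  have hu1 : (x - l₁) / (l₂ - l₁) ≤ 1 := (div_le_one (by linarith)).2 (by linarith [hx.2])
  exact sin_nonneg_of_nonneg_of_le_pi (by positivity) (by nlinarith [pi_pos])

lemma sineBump_pos_midpoint (hl : l₁ < l₂) : 0 < sineBump l₁ l₂ ((l₁ + l₂) / 2) := by
  have hu : ((l₁ + l₂) / 2 - l₁) / (l₂ - l₁) = 1 / 2 := by
    rw [div_eq_iff (by linarith)]; ring
  rw [sineBump, hu]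
  exact sin_pos_of_pos_of_lt_pi (by positivity) (by linarith [pi_pos])

lemma sineBump_nonpos (hl : l₁ < l₂) {y : ℝ} (h₁ : l₁ - (l₂ - l₁) ≤ y) (h₂ : y ≤ l₂ + (l₂ - l₁))
    (hy : y ∉ Ioo l₁ l₂) : sineBump l₁ l₂ y ≤ 0 := by
  have hℓ : 0 < l₂ - l₁ := by linarith
  set u := (y - l₁) / (l₂ - l₁) with hu
  have hu₁ : -1 ≤ u := by rw [hu, le_div_iff₀ hℓ]; linarith
  have hu₂ : u ≤ 2 := by rw [hu, div_le_iff₀ hℓ]; linarith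
  rcases le_or_gt y l₁ with hy₁ | hy₁
  · have hu₀ : u ≤ 0 := div_nonpos_of_nonpos_of_nonneg (by linarith) hℓ.le
    exact sin_nonpos_of_nonpos_of_neg_pi_le (by nlinarith [pi_pos]) (by nlinarith [pi_pos])
  · have hu₀ : 1 ≤ u := by
      rw [hu, le_div_iff₀ hℓ]
      linarith [not_and.1 hy hy₁ |> not_lt.1]
    rw [sineBump, ← sin_sub_two_pi]
    exact sin_nonpos_of_nonpos_of_neg_pi_le (by nlinarith [pi_pos]) (by nlinarith [pi_pos])

lemma sineBump_sub_add_sineBump_add (x z : ℝ) :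
    sineBump l₁ l₂ (x - z) + sineBump l₁ l₂ (x + z) =
      2 * sineBump l₁ l₂ x * cos (π * (z / (l₂ - l₁))) := by
  simp only [sineBump]
  rw [show π * ((x - z - l₁) / (l₂ - l₁)) =
      π * ((x - l₁) / (l₂ - l₁)) - π * (z / (l₂ - l₁)) by ring,
    show π * ((x + z - l₁) / (l₂ - l₁)) =
      π * ((x - l₁) / (l₂ - l₁)) + π * (z / (l₂ - l₁)) by ring, sin_sub, sin_add]
  ring

lemma cos_le_cos_mul_div {K z : ℝ} (hl : l₁ < l₂) (hK : K ≤ l₂ - l₁) (hz : |z| ≤ K) :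
    cos (π * (K / (l₂ - l₁))) ≤ cos (π * (z / (l₂ - l₁))) := by
  have hℓ : 0 < l₂ - l₁ := by linarith
  rw [← cos_abs (π * (z / (l₂ - l₁))), abs_mul, abs_div, abs_of_pos pi_pos, abs_of_pos hℓ]
  apply cos_le_cos_of_nonneg_of_le_pi (by positivity)
  · have : K / (l₂ - l₁) ≤ 1 := (div_le_one hℓ).2 hK
    nlinarith [pi_pos]
  · gcongr

/-- The sine bump is almost an eigenfunction of convolution with an even kernel: the mass of the
kernel outside `[-K, K]` and the curvature of the sine on scale `K` are the only losses. -/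
lemma integral_mul_cos_mul_sineBump_le {J : ℝ → ℝ} (hJ : Continuous J) (hJ0 : ∀ x, 0 ≤ J x)
    (hJeven : ∀ x, J (-x) = J x) (hl : l₁ < l₂) {K : ℝ} (hK0 : 0 ≤ K) (hK : K ≤ l₂ - l₁)
    {x : ℝ} (hx : x ∈ Icc l₁ l₂) :
    (∫ z in -K..K, J z) * cos (π * (K / (l₂ - l₁))) * sineBump l₁ l₂ x ≤
      ∫ y in l₁..l₂, J (x - y) * sineBump l₁ l₂ y := by
  calc (∫ z in -K..K, J z) * cos (π * (K / (l₂ - l₁))) * sineBump l₁ l₂ x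
      = ∫ z in -K..K, J z * (sineBump l₁ l₂ x * cos (π * (K / (l₂ - l₁)))) := by
        rw [intervalIntegral.integral_mul_const]; ring
    _ ≤ ∫ z in -K..K, J z * (sineBump l₁ l₂ x * cos (π * (z / (l₂ - l₁)))) := by
        refine intervalIntegral.integral_mono_on (by linarith)
          (Continuous.intervalIntegrable (by fun_prop) _ _)
          (Continuous.intervalIntegrable (by fun_prop) _ _)
          fun z hz => ?_
        have := cos_le_cos_mul_div hl hK (abs_le.2 hz)
        have := sineBump_nonneg hl hx
        have := hJ0 z
        gcongr
    _ = ∫ z in -K..K, J z * sineBump l₁ l₂ (x - z) := by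
        symm
        rw [intervalIntegral_eq_half_add_comp_neg (by fun_prop)]
        refine intervalIntegral.integral_congr fun z _ => ?_
        simp only [hJeven, sub_neg_eq_add]
        linear_combination J z * sineBump_sub_add_sineBump_add (l₁ := l₁) (l₂ := l₂) x z / 2
    _ = ∫ y in x - K..x + K, J (x - y) * sineBump l₁ l₂ y := by
        simpa only [sub_sub_cancel, sub_neg_eq_add] using
          intervalIntegral.integral_comp_sub_left (fun y => J (x - y) * sineBump l₁ l₂ y) x
            (a := -K) (b := K)
    _ ≤ ∫ y in l₁..l₂, J (x - y) * sineBump l₁ l₂ y := by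
        refine intervalIntegral_le_intervalIntegral_of_sign (by fun_prop) hl.le (by linarith)
          (fun y hy => mul_nonneg (hJ0 _) (sineBump_nonneg hl (Ioc_subset_Icc_self hy.1)))
          fun y hy => mul_nonpos_of_nonneg_of_nonpos (hJ0 _) (sineBump_nonpos hl ?_ ?_ ?_)
        · linarith [hy.1.1, hx.1]
        · linarith [hy.1.2, hx.2]
        · exact fun h => hy.2 (Ioo_subset_Ioc_self h)

end sineBump

/-- `lamP` is by definition the infimum of this set. -/
def lamPSet (d₁ d₂ a b H0 G0 : ℝ) (J₁ J₂ : ℝ → ℝ) (l₁ l₂ : ℝ) : Set ℝ :=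
  {lam : ℝ | ∃ φ₁ φ₂ : ℝ → ℝ,
    ContinuousOn φ₁ (Icc l₁ l₂) ∧ ContinuousOn φ₂ (Icc l₁ l₂) ∧
    (∀ x ∈ Icc l₁ l₂, 0 < φ₁ x ∧ 0 < φ₂ x) ∧
    (∀ x ∈ Icc l₁ l₂, opL1 d₁ a H0 J₁ l₁ l₂ φ₁ φ₂ x ≤ lam * φ₁ x ∧
      opL2 d₂ b G0 J₂ l₁ l₂ φ₁ φ₂ x ≤ lam * φ₂ x)}

section operator

variable {d a H : ℝ} {J : ℝ → ℝ} {l₁ l₂ : ℝ}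

lemma opL2_eq_opL1 (d b G : ℝ) (J : ℝ → ℝ) (l₁ l₂ : ℝ) (φ₁ φ₂ : ℝ → ℝ) (x : ℝ) :
    opL2 d b G J l₁ l₂ φ₁ φ₂ x = opL1 d b G J l₁ l₂ φ₂ φ₁ x := rfl

lemma opL1_mul_left (t : ℝ) (φ₁ φ₂ : ℝ → ℝ) (x : ℝ) :
    opL1 d a H J l₁ l₂ (fun y => t * φ₁ y) (fun y => t * φ₂ y) x =
      t * opL1 d a H J l₁ l₂ φ₁ φ₂ x := by
  simp only [opL1, mul_left_comm _ t, intervalIntegral.integral_const_mul]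
  ring

lemma opL1_mul_mul (p q : ℝ) (η : ℝ → ℝ) (x : ℝ) :
    opL1 d a H J l₁ l₂ (fun y => p * η y) (fun y => q * η y) x =
      d * p * (∫ y in l₁..l₂, J (x - y) * η y) + (H * q - (d + a) * p) * η x := by
  simp only [opL1, mul_left_comm _ p, intervalIntegral.integral_const_mul]
  ring

lemma opL1_le_opL1 (hd : 0 ≤ d) (hH : 0 ≤ H) (hJ : Continuous J) (hJ0 : ∀ x, 0 ≤ J x)
    (hl : l₁ ≤ l₂) {f₁ f₂ g₁ g₂ : ℝ → ℝ} (hf₁ : ContinuousOn f₁ (Icc l₁ l₂))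
    (hg₁ : ContinuousOn g₁ (Icc l₁ l₂)) (h₁ : ∀ y ∈ Icc l₁ l₂, f₁ y ≤ g₁ y) {x : ℝ}
    (hx : f₁ x = g₁ x) (h₂ : f₂ x ≤ g₂ x) :
    opL1 d a H J l₁ l₂ f₁ f₂ x ≤ opL1 d a H J l₁ l₂ g₁ g₂ x := by
  have hint : ∫ y in l₁..l₂, J (x - y) * f₁ y ≤ ∫ y in l₁..l₂, J (x - y) * g₁ y := by
    refine intervalIntegral.integral_mono_on hl ?_ ?_ fun y hy => by gcongr; exacts [hJ0 _, h₁ y hy]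
    all_goals
      refine ContinuousOn.intervalIntegrable ?_
      rw [uIcc_of_le hl]
      exact (by fun_prop : Continuous fun y => J (x - y)).continuousOn.mul ‹_›
  unfold opL1
  rw [hx]
  gcongr

lemma le_of_touching (hd : 0 ≤ d) (hH : 0 ≤ H) (hJ : Continuous J) (hJ0 : ∀ x, 0 ≤ J x)
    (hl : l₁ ≤ l₂) {ψ₁ ψ₂ φ₁ φ₂ : ℝ → ℝ} (hψ₁ : ContinuousOn ψ₁ (Icc l₁ l₂))
    (hφ₁ : ContinuousOn φ₁ (Icc l₁ l₂)) {γ lam t x : ℝ}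
    (h₁ : ∀ y ∈ Icc l₁ l₂, ψ₁ y ≤ t * φ₁ y) (h₂ : ψ₂ x ≤ t * φ₂ x) (hx : ψ₁ x = t * φ₁ x)
    (hpos : 0 < ψ₁ x) (ht : 0 ≤ t) (hψ : γ * ψ₁ x ≤ opL1 d a H J l₁ l₂ ψ₁ ψ₂ x)
    (hφ : opL1 d a H J l₁ l₂ φ₁ φ₂ x ≤ lam * φ₁ x) : γ ≤ lam := by
  refine le_of_mul_le_mul_right ?_ hpos
  calc γ * ψ₁ x ≤ opL1 d a H J l₁ l₂ ψ₁ ψ₂ x := hψ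
    _ ≤ opL1 d a H J l₁ l₂ (fun y => t * φ₁ y) (fun y => t * φ₂ y) x :=
        opL1_le_opL1 hd hH hJ hJ0 hl hψ₁ (continuousOn_const.mul hφ₁) h₁ hx h₂
    _ = t * opL1 d a H J l₁ l₂ φ₁ φ₂ x := opL1_mul_left t φ₁ φ₂ x
    _ ≤ t * (lam * φ₁ x) := by gcongr
    _ = lam * ψ₁ x := by rw [hx]; ring

end operator

lemma exists_touching {α : Type*} [TopologicalSpace α] {s : Set α} (hs : IsCompact s)
    {φ₁ φ₂ ψ₁ ψ₂ : α → ℝ} (hφ₁ : ContinuousOn φ₁ s) (hφ₂ : ContinuousOn φ₂ s)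
    (hψ₁ : ContinuousOn ψ₁ s) (hψ₂ : ContinuousOn ψ₂ s) (hφ : ∀ x ∈ s, 0 < φ₁ x ∧ 0 < φ₂ x)
    (hψ : ∃ x ∈ s, 0 < ψ₁ x) :
    ∃ t, 0 < t ∧ (∀ y ∈ s, ψ₁ y ≤ t * φ₁ y ∧ ψ₂ y ≤ t * φ₂ y) ∧
      ∃ x ∈ s, ψ₁ x = t * φ₁ x ∨ ψ₂ x = t * φ₂ x := by
  obtain ⟨x₀, hx₀, hψx₀⟩ := hψ
  obtain ⟨x₁, hx₁, hmax₁⟩ := hs.exists_isMaxOn ⟨x₀, hx₀⟩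
    (hψ₁.div hφ₁ fun x hx => (hφ x hx).1.ne')
  obtain ⟨x₂, hx₂, hmax₂⟩ := hs.exists_isMaxOn ⟨x₀, hx₀⟩
    (hψ₂.div hφ₂ fun x hx => (hφ x hx).2.ne')
  set t := max (ψ₁ x₁ / φ₁ x₁) (ψ₂ x₂ / φ₂ x₂)
  refine ⟨t, ?_, fun y hy => ⟨?_, ?_⟩, ?_⟩
  · exact (div_pos hψx₀ (hφ x₀ hx₀).1).trans_le ((hmax₁ hx₀).trans (le_max_left _ _))
  · exact (div_le_iff₀ (hφ y hy).1).1 ((hmax₁ hy).trans (le_max_left _ _))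
  · exact (div_le_iff₀ (hφ y hy).2).1 ((hmax₂ hy).trans (le_max_right _ _))
  · rcases le_total (ψ₂ x₂ / φ₂ x₂) (ψ₁ x₁ / φ₁ x₁) with h | h
    · refine ⟨x₁, hx₁, .inl ?_⟩
      rw [show t = _ from max_eq_left h, div_mul_cancel₀ _ (hφ x₁ hx₁).1.ne']
    · refine ⟨x₂, hx₂, .inr ?_⟩
      rw [show t = _ from max_eq_right h, div_mul_cancel₀ _ (hφ x₂ hx₂).2.ne']

section bounds

variable {d₁ d₂ a b H0 G0 : ℝ} {J₁ J₂ : ℝ → ℝ} {l₁ l₂ : ℝ}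

lemma perronRoot_mem_lamPSet (hd₁ : 0 ≤ d₁) (hd₂ : 0 ≤ d₂) (hH0 : 0 < H0) (hG0 : 0 < G0)
    {k₁ k₂ : ℝ} (hk₁ : ∀ x ∈ Icc l₁ l₂, ∫ y in l₁..l₂, J₁ (x - y) ≤ k₁)
    (hk₂ : ∀ x ∈ Icc l₁ l₂, ∫ y in l₁..l₂, J₂ (x - y) ≤ k₂) :
    perronRoot (a + d₁ * (1 - k₁)) (b + d₂ * (1 - k₂)) (H0 * G0) ∈
      lamPSet d₁ d₂ a b H0 G0 J₁ J₂ l₁ l₂ := by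
  set γ := perronRoot (a + d₁ * (1 - k₁)) (b + d₂ * (1 - k₂)) (H0 * G0)
  set q := γ + (a + d₁ * (1 - k₁))
  have hq : 0 < q := perronRoot_add_left_pos (by positivity)
  have heig : q * (γ + (b + d₂ * (1 - k₂))) = H0 * G0 := perronRoot_add_mul_add (by positivity)
  refine ⟨fun _ => H0, fun _ => q, continuousOn_const, continuousOn_const,
    fun _ _ => ⟨hH0, hq⟩, fun x hx => ⟨?_, ?_⟩⟩
  · have h := opL1_mul_mul (d := d₁) (a := a) (H := H0) (J := J₁) (l₁ := l₁) (l₂ := l₂)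
      H0 q (fun _ => 1) x
    simp only [mul_one] at h
    rw [h]
    nlinarith [mul_le_mul_of_nonneg_left (hk₁ x hx) (mul_nonneg hd₁ hH0.le)]
  · have h := opL1_mul_mul (d := d₂) (a := b) (H := G0) (J := J₂) (l₁ := l₁) (l₂ := l₂)
      q H0 (fun _ => 1) x
    simp only [mul_one] at h
    rw [opL2_eq_opL1, h]
    nlinarith [mul_le_mul_of_nonneg_left (hk₂ x hx) (mul_nonneg hd₂ hq.le)]

/-- `(H0 η, (γ + a + d₁ (1 - c₁)) η)` is a subsolution with eigenvalue `γ`; scale the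
supersolution down until it touches it and compare `L` at the touching point. -/
lemma perronRoot_le_of_mem_lamPSet (hd₁ : 0 ≤ d₁) (hd₂ : 0 ≤ d₂) (hH0 : 0 < H0) (hG0 : 0 < G0)
    (hJ₁ : Continuous J₁) (hJ₂ : Continuous J₂) (hJ₁0 : ∀ x, 0 ≤ J₁ x) (hJ₂0 : ∀ x, 0 ≤ J₂ x)
    (hl : l₁ ≤ l₂) {η : ℝ → ℝ} (hη : Continuous η)
    (hηpos : ∃ x ∈ Icc l₁ l₂, 0 < η x) {c₁ c₂ : ℝ}
    (hc₁ : ∀ x ∈ Icc l₁ l₂, c₁ * η x ≤ ∫ y in l₁..l₂, J₁ (x - y) * η y)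
    (hc₂ : ∀ x ∈ Icc l₁ l₂, c₂ * η x ≤ ∫ y in l₁..l₂, J₂ (x - y) * η y)
    {lam : ℝ} (hlam : lam ∈ lamPSet d₁ d₂ a b H0 G0 J₁ J₂ l₁ l₂) :
    perronRoot (a + d₁ * (1 - c₁)) (b + d₂ * (1 - c₂)) (H0 * G0) ≤ lam := by
  obtain ⟨φ₁, φ₂, hφ₁, hφ₂, hφ, hsup⟩ := hlam
  set γ := perronRoot (a + d₁ * (1 - c₁)) (b + d₂ * (1 - c₂)) (H0 * G0)
  set q := γ + (a + d₁ * (1 - c₁))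
  have hq : 0 < q := perronRoot_add_left_pos (by positivity)
  have heig : q * (γ + (b + d₂ * (1 - c₂))) = H0 * G0 := perronRoot_add_mul_add (by positivity)
  have hsub₁ : ∀ x ∈ Icc l₁ l₂, γ * (H0 * η x) ≤
      opL1 d₁ a H0 J₁ l₁ l₂ (fun y => H0 * η y) (fun y => q * η y) x := fun x hx => by
    rw [opL1_mul_mul]
    nlinarith [mul_le_mul_of_nonneg_left (hc₁ x hx) (mul_nonneg hd₁ hH0.le)]
  have hsub₂ : ∀ x ∈ Icc l₁ l₂, γ * (q * η x) ≤
      opL1 d₂ b G0 J₂ l₁ l₂ (fun y => q * η y) (fun y => H0 * η y) x := fun x hx => by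
    rw [opL1_mul_mul]
    nlinarith [mul_le_mul_of_nonneg_left (hc₂ x hx) (mul_nonneg hd₂ hq.le),
      congrArg (· * η x) heig]
  have hψ₁ : ContinuousOn (fun y => H0 * η y) (Icc l₁ l₂) := by fun_prop
  have hψ₂ : ContinuousOn (fun y => q * η y) (Icc l₁ l₂) := by fun_prop
  obtain ⟨x₀, hx₀, hηx₀⟩ := hηpos
  obtain ⟨t, ht, hle, x, hx, htouch | htouch⟩ := exists_touching isCompact_Icc hφ₁ hφ₂ hψ₁ hψ₂ hφ
    ⟨x₀, hx₀, mul_pos hH0 hηx₀⟩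
  · exact le_of_touching hd₁ hH0.le hJ₁ hJ₁0 hl hψ₁ hφ₁ (fun y hy => (hle y hy).1) (hle x hx).2
      htouch (by rw [htouch]; exact mul_pos ht (hφ x hx).1) ht.le (hsub₁ x hx) (hsup x hx).1
  · exact le_of_touching hd₂ hG0.le hJ₂ hJ₂0 hl hψ₂ hφ₂ (fun y hy => (hle y hy).2) (hle x hx).1
      htouch (by rw [htouch]; exact mul_pos ht (hφ x hx).2) ht.le (hsub₂ x hx) (hsup x hx).2

lemma perronRoot_add_le_of_mem_lamPSet (hd₁ : 0 ≤ d₁) (hd₂ : 0 ≤ d₂) (hH0 : 0 < H0)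
    (hG0 : 0 < G0) (hJ₁ : Continuous J₁) (hJ₂ : Continuous J₂) (hJ₁0 : ∀ x, 0 ≤ J₁ x)
    (hJ₂0 : ∀ x, 0 ≤ J₂ x) (hl : l₁ ≤ l₂) {lam : ℝ}
    (hlam : lam ∈ lamPSet d₁ d₂ a b H0 G0 J₁ J₂ l₁ l₂) :
    perronRoot (a + d₁) (b + d₂) (H0 * G0) ≤ lam := by
  have hc : ∀ J : ℝ → ℝ, (∀ x, 0 ≤ J x) →
      ∀ x ∈ Icc l₁ l₂, 0 * (fun _ => (1 : ℝ)) x ≤ ∫ y in l₁..l₂, J (x - y) * (fun _ => 1) y :=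
    fun J hJ0 x _ => by
      simp only [mul_one]
      exact intervalIntegral.integral_nonneg hl fun y _ => hJ0 (x - y)
  simpa using perronRoot_le_of_mem_lamPSet hd₁ hd₂ hH0 hG0 hJ₁ hJ₂ hJ₁0 hJ₂0 hl continuous_const
    ⟨l₁, left_mem_Icc.2 hl, one_pos⟩ (hc J₁ hJ₁0) (hc J₂ hJ₂0) hlam

end bounds

namespace KernelCond

variable {J : ℝ → ℝ}

lemma continuous (hJ : KernelCond J) : Continuous J := hJ.1

lemma exists_forall_le (hJ : KernelCond J) : ∃ C, ∀ x, J x ≤ C := hJ.2.1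

lemma nonneg (hJ : KernelCond J) (x : ℝ) : 0 ≤ J x := hJ.2.2.1 x

lemma even (hJ : KernelCond J) (x : ℝ) : J (-x) = J x := hJ.2.2.2.2.1 x

lemma integrable (hJ : KernelCond J) : Integrable J := hJ.2.2.2.2.2.1

lemma integral_eq_one (hJ : KernelCond J) : ∫ x, J x = 1 := hJ.2.2.2.2.2.2

lemma intervalIntegral_le_one (hJ : KernelCond J) {l₁ l₂ : ℝ} (hl : l₁ ≤ l₂) (x : ℝ) :
    ∫ y in l₁..l₂, J (x - y) ≤ 1 :=
  hJ.integral_eq_one ▸ intervalIntegral_comp_sub_le_integral hJ.integrable hJ.nonneg hl x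

end KernelCond

section lamP

variable {d₁ d₂ a b H0 G0 : ℝ} {J₁ J₂ : ℝ → ℝ} {l₁ l₂ : ℝ}

lemma perronRoot_mem_lamPSet_of_kernelCond (hd₁ : 0 ≤ d₁) (hd₂ : 0 ≤ d₂) (hH0 : 0 < H0)
    (hG0 : 0 < G0) (hJ₁ : KernelCond J₁) (hJ₂ : KernelCond J₂) (hl : l₁ ≤ l₂) :
    perronRoot a b (H0 * G0) ∈ lamPSet d₁ d₂ a b H0 G0 J₁ J₂ l₁ l₂ := by
  simpa using perronRoot_mem_lamPSet (k₁ := 1) (k₂ := 1) hd₁ hd₂ hH0 hG0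
    (fun x _ => hJ₁.intervalIntegral_le_one hl x) (fun x _ => hJ₂.intervalIntegral_le_one hl x)

lemma bddBelow_lamPSet (hd₁ : 0 ≤ d₁) (hd₂ : 0 ≤ d₂) (hH0 : 0 < H0) (hG0 : 0 < G0)
    (hJ₁ : KernelCond J₁) (hJ₂ : KernelCond J₂) (hl : l₁ ≤ l₂) :
    BddBelow (lamPSet d₁ d₂ a b H0 G0 J₁ J₂ l₁ l₂) :=
  ⟨_, fun _ => perronRoot_add_le_of_mem_lamPSet hd₁ hd₂ hH0 hG0 hJ₁.continuous hJ₂.continuous hJ₁.nonneg hJ₂.nonneg hl⟩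

lemma lamP_mem_Icc (hd₁ : 0 ≤ d₁) (hd₂ : 0 ≤ d₂) (hH0 : 0 < H0) (hG0 : 0 < G0)
    (hJ₁ : KernelCond J₁) (hJ₂ : KernelCond J₂) (hl : l₁ ≤ l₂) :
    lamP d₁ d₂ a b H0 G0 J₁ J₂ l₁ l₂ ∈
      Icc (perronRoot (a + d₁) (b + d₂) (H0 * G0)) (perronRoot a b (H0 * G0)) :=
  have hA := perronRoot_mem_lamPSet_of_kernelCond hd₁ hd₂ hH0 hG0 hJ₁ hJ₂ hl
  ⟨le_csInf ⟨_, hA⟩ fun _ =>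
      perronRoot_add_le_of_mem_lamPSet hd₁ hd₂ hH0 hG0 hJ₁.continuous hJ₂.continuous hJ₁.nonneg hJ₂.nonneg hl,
    csInf_le (bddBelow_lamPSet hd₁ hd₂ hH0 hG0 hJ₁ hJ₂ hl) hA⟩

lemma lamP_le_perronRoot (hd₁ : 0 ≤ d₁) (hd₂ : 0 ≤ d₂) (hH0 : 0 < H0) (hG0 : 0 < G0)
    (hJ₁ : KernelCond J₁) (hJ₂ : KernelCond J₂) (hl : l₁ ≤ l₂) {k₁ k₂ : ℝ}
    (hk₁ : ∀ x ∈ Icc l₁ l₂, ∫ y in l₁..l₂, J₁ (x - y) ≤ k₁)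
    (hk₂ : ∀ x ∈ Icc l₁ l₂, ∫ y in l₁..l₂, J₂ (x - y) ≤ k₂) :
    lamP d₁ d₂ a b H0 G0 J₁ J₂ l₁ l₂ ≤
      perronRoot (a + d₁ * (1 - k₁)) (b + d₂ * (1 - k₂)) (H0 * G0) :=
  csInf_le (bddBelow_lamPSet hd₁ hd₂ hH0 hG0 hJ₁ hJ₂ hl)
    (perronRoot_mem_lamPSet hd₁ hd₂ hH0 hG0 hk₁ hk₂)

lemma perronRoot_le_lamP (hd₁ : 0 ≤ d₁) (hd₂ : 0 ≤ d₂) (hH0 : 0 < H0) (hG0 : 0 < G0)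
    (hJ₁ : KernelCond J₁) (hJ₂ : KernelCond J₂) (hl : l₁ ≤ l₂) {η : ℝ → ℝ} (hη : Continuous η)
    (hηpos : ∃ x ∈ Icc l₁ l₂, 0 < η x) {c₁ c₂ : ℝ}
    (hc₁ : ∀ x ∈ Icc l₁ l₂, c₁ * η x ≤ ∫ y in l₁..l₂, J₁ (x - y) * η y)
    (hc₂ : ∀ x ∈ Icc l₁ l₂, c₂ * η x ≤ ∫ y in l₁..l₂, J₂ (x - y) * η y) :
    perronRoot (a + d₁ * (1 - c₁)) (b + d₂ * (1 - c₂)) (H0 * G0) ≤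
      lamP d₁ d₂ a b H0 G0 J₁ J₂ l₁ l₂ :=
  le_csInf ⟨_, perronRoot_mem_lamPSet_of_kernelCond hd₁ hd₂ hH0 hG0 hJ₁ hJ₂ hl⟩ fun _ =>
    perronRoot_le_of_mem_lamPSet hd₁ hd₂ hH0 hG0 hJ₁.continuous hJ₂.continuous hJ₁.nonneg hJ₂.nonneg hl hη hηpos hc₁ hc₂

end lamP

lemma tendsto_integral_mul_cos_atTop {J : ℝ → ℝ} (hJ : Integrable J) :
    Tendsto (fun ℓ => (∫ z in -√ℓ..√ℓ, J z) * cos (π * (√ℓ / ℓ))) atTop (𝓝 (∫ z, J z)) := by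
  have hint := intervalIntegral_tendsto_integral hJ
    (tendsto_neg_atTop_atBot.comp tendsto_sqrt_atTop) tendsto_sqrt_atTop
  have hcos : Tendsto (fun ℓ : ℝ => cos (π * (√ℓ / ℓ))) atTop (𝓝 1) := by
    simp_rw [sqrt_div_self', one_div]
    have h := ((tendsto_inv_atTop_zero.comp tendsto_sqrt_atTop).const_mul π)
    rw [mul_zero] at h
    simpa [Function.comp_def] using (continuous_cos.tendsto 0).comp h
  simpa using hint.mul hcos

section asymptotics

variable {d₁ d₂ a b H0 G0 : ℝ} {J₁ J₂ : ℝ → ℝ}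

lemma exists_abs_lamP_sub_lt_of_le_length (hd₁ : 0 ≤ d₁) (hd₂ : 0 ≤ d₂) (hH0 : 0 < H0)
    (hG0 : 0 < G0) (hJ₁ : KernelCond J₁) (hJ₂ : KernelCond J₂) {ε : ℝ} (hε : 0 < ε) :
    ∃ L : ℝ, ∀ l₁ l₂ : ℝ, l₁ < l₂ → L ≤ l₂ - l₁ →
      |lamP d₁ d₂ a b H0 G0 J₁ J₂ l₁ l₂ - perronRoot a b (H0 * G0)| < ε := by
  have hc : ∀ {J : ℝ → ℝ}, KernelCond J →
      Tendsto (fun ℓ => (∫ z in -√ℓ..√ℓ, J z) * cos (π * (√ℓ / ℓ))) atTop (𝓝 1) :=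
    fun hJ => hJ.integral_eq_one ▸ tendsto_integral_mul_cos_atTop hJ.integrable
  have hA : ∀ {J : ℝ → ℝ} {a d : ℝ}, KernelCond J → Tendsto
      (fun ℓ => a + d * (1 - (∫ z in -√ℓ..√ℓ, J z) * cos (π * (√ℓ / ℓ)))) atTop (𝓝 a) :=
    fun hJ => by simpa using (((hc hJ).const_sub 1).const_mul _).const_add _
  have hlim := tendsto_perronRoot (c := H0 * G0)
    (hA (a := a) (d := d₁) hJ₁) (hA (a := b) (d := d₂) hJ₂)
  obtain ⟨L, hL⟩ := eventually_atTop.1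
    ((hlim.eventually (Metric.ball_mem_nhds _ hε)).and (eventually_ge_atTop 1))
  refine ⟨L, fun l₁ l₂ hl hlen => ?_⟩
  obtain ⟨hdist, hℓ⟩ := hL _ hlen
  have hK : √(l₂ - l₁) ≤ l₂ - l₁ := (sqrt_le_left (by linarith)).2 (by nlinarith)
  have hmid : (l₁ + l₂) / 2 ∈ Icc l₁ l₂ := ⟨by linarith, by linarith⟩
  have hlower := perronRoot_le_lamP (a := a) (b := b) hd₁ hd₂ hH0 hG0 hJ₁ hJ₂ hl.le
    (continuous_sineBump l₁ l₂) ⟨_, hmid, sineBump_pos_midpoint hl⟩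
    (fun x hx => integral_mul_cos_mul_sineBump_le hJ₁.continuous hJ₁.nonneg hJ₁.even hl
      (sqrt_nonneg _) hK hx)
    (fun x hx => integral_mul_cos_mul_sineBump_le hJ₂.continuous hJ₂.nonneg hJ₂.even hl
      (sqrt_nonneg _) hK hx)
  have hupper := (lamP_mem_Icc (a := a) (b := b) hd₁ hd₂ hH0 hG0 hJ₁ hJ₂ hl.le).2
  rw [dist_eq, abs_lt] at hdist
  rw [abs_lt]
  constructor <;> linarith

lemma exists_abs_lamP_sub_lt_of_length_lt (hd₁ : 0 ≤ d₁) (hd₂ : 0 ≤ d₂) (hH0 : 0 < H0)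
    (hG0 : 0 < G0) (hJ₁ : KernelCond J₁) (hJ₂ : KernelCond J₂) {ε : ℝ} (hε : 0 < ε) :
    ∃ δ > 0, ∀ l₁ l₂ : ℝ, l₁ < l₂ → l₂ - l₁ < δ →
      |lamP d₁ d₂ a b H0 G0 J₁ J₂ l₁ l₂ - perronRoot (a + d₁) (b + d₂) (H0 * G0)| < ε := by
  obtain ⟨C₁, hC₁⟩ := hJ₁.exists_forall_le
  obtain ⟨C₂, hC₂⟩ := hJ₂.exists_forall_le
  have hk : ∀ C d : ℝ, Tendsto (fun ℓ : ℝ => d * (1 - C * ℓ)) (𝓝 0) (𝓝 d) := fun C d => by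
    simpa using (show Continuous fun ℓ : ℝ => d * (1 - C * ℓ) by fun_prop).tendsto 0
  obtain ⟨δ, hδ, hlim⟩ := Metric.tendsto_nhds_nhds.1
    (tendsto_perronRoot (c := H0 * G0) ((hk C₁ d₁).const_add a) ((hk C₂ d₂).const_add b)) ε hε
  refine ⟨δ, hδ, fun l₁ l₂ hl hlen => ?_⟩
  have hdist := hlim (x := l₂ - l₁) (by rwa [dist_zero_right, norm_of_nonneg (by linarith)])
  have hupper := lamP_le_perronRoot (a := a) (b := b) hd₁ hd₂ hH0 hG0 hJ₁ hJ₂ hl.le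
    (fun x _ => intervalIntegral_comp_sub_le_mul hJ₁.nonneg hC₁ hl.le x)
    (fun x _ => intervalIntegral_comp_sub_le_mul hJ₂.nonneg hC₂ hl.le x)
  have hlower := (lamP_mem_Icc (a := a) (b := b) hd₁ hd₂ hH0 hG0 hJ₁ hJ₂ hl.le).1
  rw [dist_eq, abs_lt] at hdist
  rw [abs_lt]
  constructor <;> linarith

end asymptotics

theorem statement16_general
    (d₁ d₂ a b : ℝ) (J₁ J₂ H G : ℝ → ℝ)
    (hd₁ : 0 < d₁) (hd₂ : 0 < d₂)
    (hJ₁ : KernelCond J₁) (hJ₂ : KernelCond J₂) (hHG : ReactionCond a b H G)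
    (H0 G0 : ℝ) (hH0 : H0 = derivWithin H (Ici 0) 0) (hG0 : G0 = derivWithin G (Ici 0) 0) :
    (∀ ε > (0:ℝ), ∃ L : ℝ, ∀ l₁ l₂ : ℝ, l₁ < l₂ → L ≤ l₂ - l₁ →
      |lamP d₁ d₂ a b H0 G0 J₁ J₂ l₁ l₂ -
        (-a - b + Real.sqrt ((a - b) ^ 2 + 4 * H0 * G0)) / 2| < ε) ∧
    (∀ ε > (0:ℝ), ∃ δ > (0:ℝ), ∀ l₁ l₂ : ℝ, l₁ < l₂ → l₂ - l₁ < δ →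
      |lamP d₁ d₂ a b H0 G0 J₁ J₂ l₁ l₂ -
        (-a - d₁ - b - d₂ + Real.sqrt ((a + d₁ - b - d₂) ^ 2 + 4 * H0 * G0)) / 2| < ε) ∧
    (∀ l₁ l₂ : ℝ, l₁ < l₂ →
      (-a - d₁ - b - d₂ + Real.sqrt ((a + d₁ - b - d₂) ^ 2 + 4 * H0 * G0)) / 2 ≤
        lamP d₁ d₂ a b H0 G0 J₁ J₂ l₁ l₂ ∧
      lamP d₁ d₂ a b H0 G0 J₁ J₂ l₁ l₂ ≤
        (-a - b + Real.sqrt ((a - b) ^ 2 + 4 * H0 * G0)) / 2) := by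
  have hH0pos : 0 < H0 := by rw [hH0]; exact hHG.2.2.2.2.1 0 self_mem_Ici
  have hG0pos : 0 < G0 := by rw [hG0]; exact hHG.2.2.2.2.2.1 0 self_mem_Ici
  have hγA : (-a - b + √((a - b) ^ 2 + 4 * H0 * G0)) / 2 = perronRoot a b (H0 * G0) := by
    rw [perronRoot, mul_assoc]
  have hγB : (-a - d₁ - b - d₂ + √((a + d₁ - b - d₂) ^ 2 + 4 * H0 * G0)) / 2 =
      perronRoot (a + d₁) (b + d₂) (H0 * G0) := by
    rw [perronRoot, show a + d₁ - (b + d₂) = a + d₁ - b - d₂ by ring, ← mul_assoc]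
    ring
  rw [hγA, hγB]
  exact ⟨fun ε hε => exists_abs_lamP_sub_lt_of_le_length hd₁.le hd₂.le hH0pos hG0pos hJ₁ hJ₂ hε,
    fun ε hε => exists_abs_lamP_sub_lt_of_length_lt hd₁.le hd₂.le hH0pos hG0pos hJ₁ hJ₂ hε,
    fun l₁ l₂ hl => lamP_mem_Icc hd₁.le hd₂.le hH0pos hG0pos hJ₁ hJ₂ hl.le⟩

theorem statement16
    (d₁ d₂ a b : ℝ) (J₁ J₂ H G : ℝ → ℝ)
    (hd₁ : 0 < d₁) (hd₂ : 0 < d₂) (ha : 0 < a) (hb : 0 < b)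
    (hJ₁ : KernelCond J₁) (hJ₂ : KernelCond J₂) (hHG : ReactionCond a b H G)
    (H0 G0 : ℝ) (hH0 : H0 = derivWithin H (Ici 0) 0) (hG0 : G0 = derivWithin G (Ici 0) 0) :
    (∀ ε > (0:ℝ), ∃ L : ℝ, ∀ l₁ l₂ : ℝ, l₁ < l₂ → L ≤ l₂ - l₁ →
      |lamP d₁ d₂ a b H0 G0 J₁ J₂ l₁ l₂ -
        (-a - b + Real.sqrt ((a - b) ^ 2 + 4 * H0 * G0)) / 2| < ε) ∧
    (∀ ε > (0:ℝ), ∃ δ > (0:ℝ), ∀ l₁ l₂ : ℝ, l₁ < l₂ → l₂ - l₁ < δ →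
      |lamP d₁ d₂ a b H0 G0 J₁ J₂ l₁ l₂ -
        (-a - d₁ - b - d₂ + Real.sqrt ((a + d₁ - b - d₂) ^ 2 + 4 * H0 * G0)) / 2| < ε) ∧
    (∀ l₁ l₂ : ℝ, l₁ < l₂ →
      (-a - d₁ - b - d₂ + Real.sqrt ((a + d₁ - b - d₂) ^ 2 + 4 * H0 * G0)) / 2 ≤
        lamP d₁ d₂ a b H0 G0 J₁ J₂ l₁ l₂ ∧
      lamP d₁ d₂ a b H0 G0 J₁ J₂ l₁ l₂ ≤
        (-a - b + Real.sqrt ((a - b) ^ 2 + 4 * H0 * G0)) / 2) :=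
  statement16_general d₁ d₂ a b J₁ J₂ H G hd₁ hd₂ hJ₁ hJ₂ hHG H0 G0 hH0 hG0
end
end
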